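/- arXiv:2001.08054 — 4 statements merged into one kernel-verified Lean document; each statement's English description precedes it below -/
import Mathlib

section
/- For every 3-periodic billiard orbit P₁P₂P₃ in the ellipse E, the ratio of the area A' of its excentral triangle to the area A'' of its extouch triangle is the same and equals A'/A'' = ((a² − b²)² / ((δ − b²)(a² − δ)))², i.e., A'/A'' = (2R/r)² where r and R are the orbit's inradius and circumradius. -/
noncomputable section

open EuclideanGeometry Real

set_option maxHeartbeats 1600000

/-- Points of the plane. -/
abbrev Pt := EuclideanSpace ℝ (Fin 2)

/-- Membership in the billiard ellipse `x²/a² + y²/b² = 1`. -/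
def onEllipse (a b : ℝ) (P : Pt) : Prop :=
  (P 0) ^ 2 / a ^ 2 + (P 1) ^ 2 / b ^ 2 = 1

/-- Billiard reflection law at vertex `P` (other vertices `Q`, `R`): the sum of the two
unit vectors from `P` towards `Q` and `R` is orthogonal to the tangent direction
`(-P.y/b², P.x/a²)` of the ellipse at `P`. -/
def reflects (a b : ℝ) (P Q R : Pt) : Prop :=
  (‖Q - P‖⁻¹ • (Q - P) + ‖R - P‖⁻¹ • (R - P)) 0 * (-(P 1) / b ^ 2) +
  (‖Q - P‖⁻¹ • (Q - P) + ‖R - P‖⁻¹ • (R - P)) 1 * ((P 0) / a ^ 2) = 0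

/-- `P₁P₂P₃` is a 3-periodic billiard orbit in the ellipse with semiaxes `a`, `b`:
pairwise distinct points on the ellipse satisfying the reflection law at every vertex. -/
def IsOrbit (a b : ℝ) (P₁ P₂ P₃ : Pt) : Prop :=
  P₁ ≠ P₂ ∧ P₂ ≠ P₃ ∧ P₁ ≠ P₃ ∧
  onEllipse a b P₁ ∧ onEllipse a b P₂ ∧ onEllipse a b P₃ ∧
  reflects a b P₁ P₂ P₃ ∧ reflects a b P₂ P₃ P₁ ∧ reflects a b P₃ P₁ P₂

/-- squared norm in coordinates -/
lemma normsq_coord (P Q : Pt) :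
    ‖Q - P‖^2 = (Q 0 - P 0)^2 + (Q 1 - P 1)^2 := by
  rw [EuclideanSpace.norm_sq_eq]
  simp [Fin.sum_univ_two]

/-- the reflection law in coordinates -/
lemma refl_coords (a b : ℝ) (P Q R : Pt) (h : reflects a b P Q R) :
    (‖Q-P‖⁻¹*(Q 0-P 0)+‖R-P‖⁻¹*(R 0-P 0))*(-(P 1)/b^2)
    + (‖Q-P‖⁻¹*(Q 1-P 1)+‖R-P‖⁻¹*(R 1-P 1))*((P 0)/a^2) = 0 := by
  simpa [reflects, PiLp.add_apply, PiLp.smul_apply, PiLp.sub_apply] using h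

/-- three distinct collinear points on an ellipse: impossible -/
lemma collin_contra (a b px py qx qy rx ry t : ℝ)
    (eP : b^2*px^2 + a^2*py^2 = a^2*b^2)
    (eQ : b^2*qx^2 + a^2*qy^2 = a^2*b^2)
    (eR : b^2*rx^2 + a^2*ry^2 = a^2*b^2)
    (hx : qx - px = t*(rx-px)) (hy : qy - py = t*(ry-py))
    (ht0 : t ≠ 0) (ht1 : t ≠ 1)
    (hbeta : 0 < b^2*(rx-px)^2 + a^2*(ry-py)^2) : False := by
  have hqx : qx = px + t*(rx-px) := by linarith
  have hqy : qy = py + t*(ry-py) := by linarith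
  subst hqx hqy
  have h1 : 2*t*(b^2*px*(rx-px)+a^2*py*(ry-py)) + t^2*(b^2*(rx-px)^2+a^2*(ry-py)^2) = 0 := by
    linear_combination eQ - eP
  have h2 : 2*(b^2*px*(rx-px)+a^2*py*(ry-py)) + (b^2*(rx-px)^2+a^2*(ry-py)^2) = 0 := by
    linear_combination eR - eP
  have h3 : t*((t-1)*(b^2*(rx-px)^2+a^2*(ry-py)^2)) = 0 := by
    linear_combination h1 - t*h2
  rcases mul_eq_zero.mp h3 with h | h
  · exact ht0 h
  rcases mul_eq_zero.mp h with h' | h'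
  · exact ht1 (by linarith)
  · nlinarith

/-- reflection law at vertex P gives the Joachimsthal relation -/
lemma vertex (a b px py qx qy rx ry sQ sR : ℝ)
    (ha : a ≠ 0) (hb : b ≠ 0)
    (eP : b^2*px^2 + a^2*py^2 = a^2*b^2)
    (eQ : b^2*qx^2 + a^2*qy^2 = a^2*b^2)
    (eR : b^2*rx^2 + a^2*ry^2 = a^2*b^2)
    (hsQ : sQ^2 = (qx-px)^2+(qy-py)^2)
    (hsR : sR^2 = (rx-px)^2+(ry-py)^2)
    (hsQ0 : 0 < sQ) (hsR0 : 0 < sR)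
    (hrefl : (sQ⁻¹*(qx-px)+sR⁻¹*(rx-px))*(-py/b^2) + (sQ⁻¹*(qy-py)+sR⁻¹*(ry-py))*(px/a^2) = 0) :
    (b^2*(px*qx)+a^2*(py*qy) - a^2*b^2)*sR = (b^2*(px*rx)+a^2*(py*ry) - a^2*b^2)*sQ := by
  have hsQne : sQ ≠ 0 := ne_of_gt hsQ0
  have hsRne : sR ≠ 0 := ne_of_gt hsR0
  have hc' : ((sR*(qx-px)+sQ*(rx-px)) * (a^2*py)) * (sQ*sR)
      = ((sR*(qy-py)+sQ*(ry-py)) * (b^2*px)) * (sQ*sR) := by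
    field_simp at hrefl
    linear_combination (-(sQ*sR)) * hrefl
  have hc := mul_right_cancel₀ (mul_ne_zero hsQne hsRne) hc'
  have hD : (b^2*px)^2+(a^2*py)^2 ≠ 0 := by
    intro h0
    have h1 : px = 0 := by
      have : b^2*px = 0 := by nlinarith [sq_nonneg (b^2*px), sq_nonneg (a^2*py)]
      rcases mul_eq_zero.mp this with h | h
      · exact absurd h (pow_ne_zero 2 hb)
      · exact h
    have h2 : py = 0 := by
      have : a^2*py = 0 := by nlinarith [sq_nonneg (b^2*px), sq_nonneg (a^2*py)]
      rcases mul_eq_zero.mp this with h | h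
      · exact absurd h (pow_ne_zero 2 ha)
      · exact h
    rw [h1, h2] at eP
    have h3 : a^2*b^2 = 0 := by linarith [eP]
    rcases mul_eq_zero.mp h3 with h | h
    · exact pow_ne_zero 2 ha h
    · exact pow_ne_zero 2 hb h
  have hWxD : (sR*(qx-px)+sQ*(rx-px)) * ((b^2*px)^2+(a^2*py)^2)
      = (b^2*px) * ((sR*(qx-px)+sQ*(rx-px))*(b^2*px)+(sR*(qy-py)+sQ*(ry-py))*(a^2*py)) := by
    linear_combination (a^2*py)*hc
  have hWyD : (sR*(qy-py)+sQ*(ry-py)) * ((b^2*px)^2+(a^2*py)^2)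
      = (a^2*py) * ((sR*(qx-px)+sQ*(rx-px))*(b^2*px)+(sR*(qy-py)+sQ*(ry-py))*(a^2*py)) := by
    linear_combination (-(b^2*px))*hc
  by_cases hM : (sR*(qx-px)+sQ*(rx-px))*(b^2*px)+(sR*(qy-py)+sQ*(ry-py))*(a^2*py) = 0
  · -- degenerate: collinear, contradiction
    exfalso
    have hWx0 : sR*(qx-px)+sQ*(rx-px) = 0 := by
      rw [hM, mul_zero] at hWxD
      rcases mul_eq_zero.mp hWxD with h | h
      · exact h
      · exact absurd h hD
    have hWy0 : sR*(qy-py)+sQ*(ry-py) = 0 := by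
      rw [hM, mul_zero] at hWyD
      rcases mul_eq_zero.mp hWyD with h | h
      · exact h
      · exact absurd h hD
    have hx : qx - px = (-(sQ/sR))*(rx-px) := by
      field_simp
      linear_combination hWx0
    have hy : qy - py = (-(sQ/sR))*(ry-py) := by
      field_simp
      linear_combination hWy0
    have ht0 : (-(sQ/sR)) ≠ 0 := by
      simp only [neg_ne_zero]
      exact div_ne_zero hsQne hsRne
    have ht1 : (-(sQ/sR)) ≠ 1 := by
      have : 0 < sQ/sR := div_pos hsQ0 hsR0
      intro hcon
      linarith [hcon, this]
    have hbeta : 0 < b^2*(rx-px)^2 + a^2*(ry-py)^2 := by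
      have hrp : (rx-px) ≠ 0 ∨ (ry-py) ≠ 0 := by
        by_contra hcon
        push_neg at hcon
        have h2 : sR^2 = 0 := by rw [hsR, hcon.1, hcon.2]; ring
        nlinarith [hsR0, h2]
      rcases hrp with h | h
      · have t1 : 0 < b^2*(rx-px)^2 := by positivity
        have t2 : 0 ≤ a^2*(ry-py)^2 := by positivity
        linarith
      · have t1 : 0 < a^2*(ry-py)^2 := by positivity
        have t2 : 0 ≤ b^2*(rx-px)^2 := by positivity
        linarith
    exact collin_contra a b px py qx qy rx ry (-(sQ/sR)) eP eQ eR hx hy ht0 ht1 hbeta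
  · have hkey : sR*((qx-px)*(sR*(qx-px)+sQ*(rx-px)) + (qy-py)*(sR*(qy-py)+sQ*(ry-py)))
        = sQ*((rx-px)*(sR*(qx-px)+sQ*(rx-px))+(ry-py)*(sR*(qy-py)+sQ*(ry-py))) := by
      linear_combination (-(sR^2))*hsQ + sQ^2*hsR
    have h5 : (sR*((qx-px)*(b^2*px)+(qy-py)*(a^2*py)))
          *((sR*(qx-px)+sQ*(rx-px))*(b^2*px)+(sR*(qy-py)+sQ*(ry-py))*(a^2*py))
        = (sQ*((rx-px)*(b^2*px)+(ry-py)*(a^2*py)))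
          *((sR*(qx-px)+sQ*(rx-px))*(b^2*px)+(sR*(qy-py)+sQ*(ry-py))*(a^2*py)) := by
      linear_combination ((b^2*px)^2+(a^2*py)^2)*hkey
        - (sR*(qx-px)-sQ*(rx-px))*hWxD - (sR*(qy-py)-sQ*(ry-py))*hWyD
    have h6 := mul_right_cancel₀ hM h5
    linear_combination h6 + (sR - sQ)*eP


/-- determinant of a rank-≤2 Gram-type 3×3 matrix vanishes -/
lemma det3 (u1 u2 u3 v1 v2 v3 A B : ℝ) :
    (B*(u1*u1)+A*(v1*v1)) * ((B*(u2*u2)+A*(v2*v2))*(B*(u3*u3)+A*(v3*v3)) - (B*(u2*u3)+A*(v2*v3))^2)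
    - (B*(u1*u2)+A*(v1*v2)) * ((B*(u1*u2)+A*(v1*v2))*(B*(u3*u3)+A*(v3*v3)) - (B*(u2*u3)+A*(v2*v3))*(B*(u1*u3)+A*(v1*v3)))
    + (B*(u1*u3)+A*(v1*v3)) * ((B*(u1*u2)+A*(v1*v2))*(B*(u2*u3)+A*(v2*v3)) - (B*(u2*u2)+A*(v2*v2))*(B*(u1*u3)+A*(v1*v3))) = 0 := by
  ring

lemma lag1 (ux uy vx vy : ℝ) :
    ((ux*ux)+(uy*uy))*((vx*vx)+(vy*vy)) - ((ux*vx)+(uy*vy))^2 = (ux*vy-uy*vx)^2 := by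
  ring

lemma lag2 (ux uy vx vy A B : ℝ) :
    (B*(ux*ux)+A*(uy*uy))*(B*(vx*vx)+A*(vy*vy)) - (B*(ux*vx)+A*(uy*vy))^2
      = A*B*(ux*vy-uy*vx)^2 := by
  ring

lemma lag3 (ux uy vx vy A B : ℝ) :
    (B*(ux*ux)+A*(uy*uy))*((vx*vx)+(vy*vy)) + (B*(vx*vx)+A*(vy*vy))*((ux*ux)+(uy*uy))
      - 2*(B*(ux*vx)+A*(uy*vy))*((ux*vx)+(uy*vy))
      = (A+B)*(ux*vy-uy*vx)^2 := by
  ring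

/-- excentral triangle cross product -/
lemma exc_cross (x1 y1 x2 y2 x3 y3 s1 s2 s3 : ℝ)
    (h1 : -s1+s2+s3 ≠ 0) (h2 : s1-s2+s3 ≠ 0) (h3 : s1+s2-s3 ≠ 0) :
    ((s1-s2+s3)⁻¹*(s1*x1+(-s2)*x2+s3*x3) - (-s1+s2+s3)⁻¹*((-s1)*x1+s2*x2+s3*x3))
      * ((s1+s2-s3)⁻¹*(s1*y1+s2*y2+(-s3)*y3) - (-s1+s2+s3)⁻¹*((-s1)*y1+s2*y2+s3*y3))
    - ((s1-s2+s3)⁻¹*(s1*y1+(-s2)*y2+s3*y3) - (-s1+s2+s3)⁻¹*((-s1)*y1+s2*y2+s3*y3))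
      * ((s1+s2-s3)⁻¹*(s1*x1+s2*x2+(-s3)*x3) - (-s1+s2+s3)⁻¹*((-s1)*x1+s2*x2+s3*x3))
    = (4*(s1*s2*s3)/((-s1+s2+s3)*((s1-s2+s3)*(s1+s2-s3))))
        * ((x2-x1)*(y3-y1)-(y2-y1)*(x3-x1)) := by
  field_simp
  ring

/-- extouch triangle cross product -/
lemma ext_cross (x1 y1 x2 y2 x3 y3 s1 s2 s3 : ℝ)
    (h1 : s1 ≠ 0) (h2 : s2 ≠ 0) (h3 : s3 ≠ 0) :
    ((x3 + ((s1+s2+s3)/2 - s1)/s2*(x1-x3)) - (x2 + ((s1+s2+s3)/2 - s3)/s1*(x3-x2)))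
      * ((y1 + ((s1+s2+s3)/2 - s2)/s3*(y2-y1)) - (y2 + ((s1+s2+s3)/2 - s3)/s1*(y3-y2)))
    - ((y3 + ((s1+s2+s3)/2 - s1)/s2*(y1-y3)) - (y2 + ((s1+s2+s3)/2 - s3)/s1*(y3-y2)))
      * ((x1 + ((s1+s2+s3)/2 - s2)/s3*(x2-x1)) - (x2 + ((s1+s2+s3)/2 - s3)/s1*(x3-x2)))
    = ((-s1+s2+s3)*((s1-s2+s3)*(s1+s2-s3))/(4*(s1*s2*s3)))
        * ((x2-x1)*(y3-y1)-(y2-y1)*(x3-x1)) := by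
  field_simp
  ring

/-- the key algebraic identity -/
lemma star_identity (e1 e2 e3 p q : ℝ)
    (hPhi : 4*e2 - e1^2 ≠ 0)
    (hA : p * (4*e2 - e1^2)^2 = 2*e3*(-e1^3+4*e1*e2-6*e3))
    (hB : q * (4*e2 - e1^2)^3 = e1*(-e1^3+4*e1*e2-8*e3)*e3^2) :
    16*e3^2*p^2*(p^2-3*q)
      = (4*e3*(p^2-2*q)+(p^2-4*q)*(-e1^3+4*e1*e2-8*e3))^2 := by
  apply mul_right_cancel₀ (pow_ne_zero 8 hPhi)
  calc 16*e3^2*p^2*(p^2-3*q) * (4*e2 - e1^2)^8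
      = 16*e3^2*(p*(4*e2 - e1^2)^2)^2 *
        ((p*(4*e2 - e1^2)^2)^2 - 3*(q*(4*e2 - e1^2)^3)*(4*e2 - e1^2)) := by ring
    _ = 16*e3^2*(2*e3*(-e1^3+4*e1*e2-6*e3))^2 *
        ((2*e3*(-e1^3+4*e1*e2-6*e3))^2 - 3*(e1*(-e1^3+4*e1*e2-8*e3)*e3^2)*(4*e2 - e1^2)) := by
        rw [hA, hB]
    _ = (4*e3*((2*e3*(-e1^3+4*e1*e2-6*e3))^2 - 2*(e1*(-e1^3+4*e1*e2-8*e3)*e3^2)*(4*e2 - e1^2))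
        + ((2*e3*(-e1^3+4*e1*e2-6*e3))^2 - 4*(e1*(-e1^3+4*e1*e2-8*e3)*e3^2)*(4*e2 - e1^2))
          *(-e1^3+4*e1*e2-8*e3))^2 := by ring
    _ = (4*e3*((p*(4*e2 - e1^2)^2)^2 - 2*(q*(4*e2 - e1^2)^3)*(4*e2 - e1^2))
        + ((p*(4*e2 - e1^2)^2)^2 - 4*(q*(4*e2 - e1^2)^3)*(4*e2 - e1^2))
          *(-e1^3+4*e1*e2-8*e3))^2 := by rw [hA, hB]
    _ = (4*e3*(p^2-2*q)+(p^2-4*q)*(-e1^3+4*e1*e2-8*e3))^2 * (4*e2 - e1^2)^8 := by ring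


/-- The ratio of excentral to extouch triangle areas is invariant. -/
theorem excentral_extouch_area_ratio (a b : ℝ) (hb : 0 < b) (hab : b < a)
    (P₁ P₂ P₃ : Pt) (h : IsOrbit a b P₁ P₂ P₃) :
    let s₁ := ‖P₃ - P₂‖
    let s₂ := ‖P₁ - P₃‖
    let s₃ := ‖P₂ - P₁‖
    let L := s₁ + s₂ + s₃
    let E₁ : Pt := (-s₁ + s₂ + s₃)⁻¹ • ((-s₁) • P₁ + s₂ • P₂ + s₃ • P₃)
    let E₂ : Pt := (s₁ - s₂ + s₃)⁻¹ • (s₁ • P₁ + (-s₂) • P₂ + s₃ • P₃)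
    let E₃ : Pt := (s₁ + s₂ - s₃)⁻¹ • (s₁ • P₁ + s₂ • P₂ + (-s₃) • P₃)
    let A' := |((E₂ - E₁) 0) * ((E₃ - E₁) 1) - ((E₂ - E₁) 1) * ((E₃ - E₁) 0)| / 2
    let Q₁ : Pt := P₂ + ((L / 2 - s₃) / s₁) • (P₃ - P₂)
    let Q₂ : Pt := P₃ + ((L / 2 - s₁) / s₂) • (P₁ - P₃)
    let Q₃ : Pt := P₁ + ((L / 2 - s₂) / s₃) • (P₂ - P₁)
    let A'' := |((Q₂ - Q₁) 0) * ((Q₃ - Q₁) 1) - ((Q₂ - Q₁) 1) * ((Q₃ - Q₁) 0)| / 2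
    let δ := Real.sqrt (a ^ 4 - a ^ 2 * b ^ 2 + b ^ 4)
    A' / A'' = ((a ^ 2 - b ^ 2) ^ 2 / ((δ - b ^ 2) * (a ^ 2 - δ))) ^ 2 := by
  intro s₁ s₂ s₃ L E₁ E₂ E₃ A' Q₁ Q₂ Q₃ A'' δ
  obtain ⟨h12, h23, h13, he1, he2, he3, hr1, hr2, hr3⟩ := h
  have haa : 0 < a := hb.trans hab
  have ha0 : a ≠ 0 := ne_of_gt haa
  have hb0 : b ≠ 0 := ne_of_gt hb
  have hK0 : (a^2*b^2) ≠ 0 := by positivity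
  -- side lengths positive
  have hs1p : 0 < s₁ := norm_pos_iff.mpr (sub_ne_zero_of_ne h23.symm)
  have hs2p : 0 < s₂ := norm_pos_iff.mpr (sub_ne_zero_of_ne h13)
  have hs3p : 0 < s₃ := norm_pos_iff.mpr (sub_ne_zero_of_ne h12.symm)
  have hs1ne : s₁ ≠ 0 := ne_of_gt hs1p
  have hs2ne : s₂ ≠ 0 := ne_of_gt hs2p
  have hs3ne : s₃ ≠ 0 := ne_of_gt hs3p
  -- squared side lengths in coordinates
  have hsq1 : s₁^2 = ((P₃ 0)-(P₂ 0))^2 + ((P₃ 1)-(P₂ 1))^2 := normsq_coord P₂ P₃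
  have hsq2 : s₂^2 = ((P₃ 0)-(P₁ 0))^2 + ((P₃ 1)-(P₁ 1))^2 := by
    show ‖P₁ - P₃‖^2 = _
    rw [norm_sub_rev]
    exact normsq_coord P₁ P₃
  have hsq3 : s₃^2 = ((P₂ 0)-(P₁ 0))^2 + ((P₂ 1)-(P₁ 1))^2 := normsq_coord P₁ P₂
  -- scaled ellipse equations
  have hea1 : b^2*(P₁ 0)^2 + a^2*(P₁ 1)^2 = a^2*b^2 := by
    unfold onEllipse at he1; field_simp at he1; linear_combination he1
  have hea2 : b^2*(P₂ 0)^2 + a^2*(P₂ 1)^2 = a^2*b^2 := by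
    unfold onEllipse at he2; field_simp at he2; linear_combination he2
  have hea3 : b^2*(P₃ 0)^2 + a^2*(P₃ 1)^2 = a^2*b^2 := by
    unfold onEllipse at he3; field_simp at he3; linear_combination he3
  -- reflection law at P₁ and P₂ in coordinates
  have hrc1 := refl_coords a b P₁ P₂ P₃ hr1
  rw [norm_sub_rev P₃ P₁] at hrc1
  have hrc2 := refl_coords a b P₂ P₃ P₁ hr2
  rw [norm_sub_rev P₁ P₂] at hrc2
  have hv1 := vertex a b (P₁ 0) (P₁ 1) (P₂ 0) (P₂ 1) (P₃ 0) (P₃ 1) s₃ s₂ ha0 hb0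
    hea1 hea2 hea3 hsq3 hsq2 hs3p hs2p hrc1
  have hsq3' : s₃^2 = ((P₁ 0)-(P₂ 0))^2 + ((P₁ 1)-(P₂ 1))^2 := by linear_combination hsq3
  have hv2 := vertex a b (P₂ 0) (P₂ 1) (P₃ 0) (P₃ 1) (P₁ 0) (P₁ 1) s₁ s₃ ha0 hb0
    hea2 hea3 hea1 hsq1 hsq3' hs1p hs3p hrc2
  -- Joachimsthal invariant
  set j := (b^2*((P₁ 0)*(P₂ 0))+a^2*((P₁ 1)*(P₂ 1)) - a^2*b^2)/(s₃*(a^2*b^2)) with hjdef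
  have hjs3 : b^2*((P₁ 0)*(P₂ 0))+a^2*((P₁ 1)*(P₂ 1)) - a^2*b^2 = j*s₃*(a^2*b^2) := by
    rw [hjdef]; field_simp
  have hjs2 : b^2*((P₁ 0)*(P₃ 0))+a^2*((P₁ 1)*(P₃ 1)) - a^2*b^2 = j*s₂*(a^2*b^2) := by
    have h' : (b^2*((P₁ 0)*(P₃ 0))+a^2*((P₁ 1)*(P₃ 1)) - a^2*b^2)*s₃ = (j*s₂*(a^2*b^2))*s₃ := by
      linear_combination (-1)*hv1 + s₂*hjs3
    exact mul_right_cancel₀ hs3ne h'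
  have hjs1 : b^2*((P₂ 0)*(P₃ 0))+a^2*((P₂ 1)*(P₃ 1)) - a^2*b^2 = j*s₁*(a^2*b^2) := by
    have h' : (b^2*((P₂ 0)*(P₃ 0))+a^2*((P₂ 1)*(P₃ 1)) - a^2*b^2)*s₃ = (j*s₁*(a^2*b^2))*s₃ := by
      linear_combination hv2 + s₁*hjs3
    exact mul_right_cancel₀ hs3ne h'
  -- matrix entries
  have m11 : b^2*((P₁ 0)*(P₁ 0))+a^2*((P₁ 1)*(P₁ 1)) = a^2*b^2 := by linear_combination hea1
  have m22 : b^2*((P₂ 0)*(P₂ 0))+a^2*((P₂ 1)*(P₂ 1)) = a^2*b^2 := by linear_combination hea2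
  have m33 : b^2*((P₃ 0)*(P₃ 0))+a^2*((P₃ 1)*(P₃ 1)) = a^2*b^2 := by linear_combination hea3
  have m12 : b^2*((P₁ 0)*(P₂ 0))+a^2*((P₁ 1)*(P₂ 1)) = a^2*b^2 + j*s₃*(a^2*b^2) := by linear_combination hjs3
  have m13 : b^2*((P₁ 0)*(P₃ 0))+a^2*((P₁ 1)*(P₃ 1)) = a^2*b^2 + j*s₂*(a^2*b^2) := by linear_combination hjs2
  have m23 : b^2*((P₂ 0)*(P₃ 0))+a^2*((P₂ 1)*(P₃ 1)) = a^2*b^2 + j*s₁*(a^2*b^2) := by linear_combination hjs1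
  -- Gram determinant relation
  have hdet := det3 (P₁ 0) (P₂ 0) (P₃ 0) (P₁ 1) (P₂ 1) (P₃ 1) (a^2) (b^2)
  rw [m11, m22, m33, m12, m13, m23] at hdet
  -- Lagrange-type identities
  have F1 : b^2*(((P₂ 0)-(P₁ 0))*((P₂ 0)-(P₁ 0))) + a^2*(((P₂ 1)-(P₁ 1))*((P₂ 1)-(P₁ 1))) = -2*j*s₃*(a^2*b^2) := by
    linear_combination hea1 + hea2 - 2*m12
  have F2 : b^2*(((P₃ 0)-(P₁ 0))*((P₃ 0)-(P₁ 0))) + a^2*(((P₃ 1)-(P₁ 1))*((P₃ 1)-(P₁ 1))) = -2*j*s₂*(a^2*b^2) := by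
    linear_combination hea1 + hea3 - 2*m13
  have F3 : b^2*(((P₂ 0)-(P₁ 0))*((P₃ 0)-(P₁ 0))) + a^2*(((P₂ 1)-(P₁ 1))*((P₃ 1)-(P₁ 1))) = j*(s₁-s₂-s₃)*(a^2*b^2) := by
    linear_combination hea1 + m23 - m12 - m13
  have F4 : (((P₂ 0)-(P₁ 0))*((P₂ 0)-(P₁ 0))) + (((P₂ 1)-(P₁ 1))*((P₂ 1)-(P₁ 1))) = s₃^2 := by linear_combination -hsq3
  have F5 : (((P₃ 0)-(P₁ 0))*((P₃ 0)-(P₁ 0))) + (((P₃ 1)-(P₁ 1))*((P₃ 1)-(P₁ 1))) = s₂^2 := by linear_combination -hsq2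
  have F6 : (((P₂ 0)-(P₁ 0))*((P₃ 0)-(P₁ 0))) + (((P₂ 1)-(P₁ 1))*((P₃ 1)-(P₁ 1))) = (s₂^2+s₃^2-s₁^2)/2 := by
    linear_combination (-1/2)*hsq2 + (-1/2)*hsq3 + (1/2)*hsq1
  have hlag2 := lag2 ((P₂ 0)-(P₁ 0)) ((P₂ 1)-(P₁ 1)) ((P₃ 0)-(P₁ 0)) ((P₃ 1)-(P₁ 1)) (a^2) (b^2)
  rw [F1, F2, F3] at hlag2
  have hlag3 := lag3 ((P₂ 0)-(P₁ 0)) ((P₂ 1)-(P₁ 1)) ((P₃ 0)-(P₁ 0)) ((P₃ 1)-(P₁ 1)) (a^2) (b^2)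
  rw [F1, F2, F3, F4, F5, F6] at hlag3
  have hlag1 := lag1 ((P₂ 0)-(P₁ 0)) ((P₂ 1)-(P₁ 1)) ((P₃ 0)-(P₁ 0)) ((P₃ 1)-(P₁ 1))
  rw [F4, F5, F6] at hlag1
  -- scalar relations
  have hR2 : j^2*(2*(s₁*s₂+s₂*s₃+s₃*s₁) - (s₁^2+s₂^2+s₃^2))*(a^2*b^2) = (((P₂ 0)-(P₁ 0))*((P₃ 1)-(P₁ 1))-((P₂ 1)-(P₁ 1))*((P₃ 0)-(P₁ 0)))^2 := by
    apply mul_left_cancel₀ hK0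
    linear_combination hlag2
  have hR3 : -(j*((s₁^2*s₂+s₁^2*s₃+s₂^2*s₁+s₂^2*s₃+s₃^2*s₁+s₃^2*s₂)-(s₁^3+s₂^3+s₃^3)))*(a^2*b^2) = (a^2+b^2)*(((P₂ 0)-(P₁ 0))*((P₃ 1)-(P₁ 1))-((P₂ 1)-(P₁ 1))*((P₃ 0)-(P₁ 0)))^2 := by
    linear_combination hlag3
  have hHeron : 4*(((P₂ 0)-(P₁ 0))*((P₃ 1)-(P₁ 1))-((P₂ 1)-(P₁ 1))*((P₃ 0)-(P₁ 0)))^2 = (2*(s₁^2*s₂^2+s₂^2*s₃^2+s₃^2*s₁^2)-(s₁^4+s₂^4+s₃^4)) := by linear_combination (-4)*hlag1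
  -- the triangle is nondegenerate
  have hTc0 : (((P₂ 0)-(P₁ 0))*((P₃ 1)-(P₁ 1))-((P₂ 1)-(P₁ 1))*((P₃ 0)-(P₁ 0))) ≠ 0 := by
    intro h0
    have hvne : 0 < ((P₃ 0)-(P₁ 0))^2 + ((P₃ 1)-(P₁ 1))^2 := by rw [← hsq2]; positivity
    have hxp : (((P₂ 0)-(P₁ 0)))*s₂^2 = ((((P₂ 0)-(P₁ 0))*((P₃ 0)-(P₁ 0))+((P₂ 1)-(P₁ 1))*((P₃ 1)-(P₁ 1))))*((P₃ 0)-(P₁ 0)) := by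
      linear_combination ((P₂ 0)-(P₁ 0))*hsq2 + ((P₃ 1)-(P₁ 1))*h0
    have hyp : (((P₂ 1)-(P₁ 1)))*s₂^2 = ((((P₂ 0)-(P₁ 0))*((P₃ 0)-(P₁ 0))+((P₂ 1)-(P₁ 1))*((P₃ 1)-(P₁ 1))))*((P₃ 1)-(P₁ 1)) := by
      linear_combination ((P₂ 1)-(P₁ 1))*hsq2 - ((P₃ 0)-(P₁ 0))*h0
    set t := (((P₂ 0)-(P₁ 0))*((P₃ 0)-(P₁ 0))+((P₂ 1)-(P₁ 1))*((P₃ 1)-(P₁ 1)))/s₂^2 with htdef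
    have hs2sqne : s₂^2 ≠ 0 := pow_ne_zero 2 hs2ne
    have hx : (P₂ 0) - (P₁ 0) = t*((P₃ 0)-(P₁ 0)) := by
      rw [htdef]; field_simp; linear_combination hxp
    have hy : (P₂ 1) - (P₁ 1) = t*((P₃ 1)-(P₁ 1)) := by
      rw [htdef]; field_simp; linear_combination hyp
    have ht0 : t ≠ 0 := by
      intro ht
      rw [ht] at hx hy
      have h3 : s₃^2 = 0 := by
        rw [hsq3]
        simp only [zero_mul] at hx hy
        rw [hx, hy]; ring
      nlinarith only [hs3p, h3]
    have ht1 : t ≠ 1 := by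
      intro ht
      rw [ht, one_mul] at hx hy
      have h1 : s₁^2 = 0 := by
        rw [hsq1]
        have e1 : (P₃ 0) - (P₂ 0) = 0 := by linarith only [hx]
        have e2 : (P₃ 1) - (P₂ 1) = 0 := by linarith only [hy]
        rw [e1, e2]; ring
      nlinarith only [hs1p, h1]
    have hbeta : 0 < b^2*((P₃ 0)-(P₁ 0))^2 + a^2*((P₃ 1)-(P₁ 1))^2 := by
      have hrp : ((P₃ 0)-(P₁ 0)) ≠ 0 ∨ ((P₃ 1)-(P₁ 1)) ≠ 0 := by
        by_contra hcon
        push_neg at hcon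
        rw [hcon.1, hcon.2] at hvne
        norm_num at hvne
      rcases hrp with hvz | hvz
      · have t1 : 0 < b^2*((P₃ 0)-(P₁ 0))^2 := by positivity
        have t2 : 0 ≤ a^2*((P₃ 1)-(P₁ 1))^2 := by positivity
        linarith only [t1, t2]
      · have t1 : 0 < a^2*((P₃ 1)-(P₁ 1))^2 := by positivity
        have t2 : 0 ≤ b^2*((P₃ 0)-(P₁ 0))^2 := by positivity
        linarith only [t1, t2]
    exact collin_contra a b (P₁ 0) (P₁ 1) (P₂ 0) (P₂ 1) (P₃ 0) (P₃ 1) t hea1 hea2 hea3 hx hy ht0 ht1 hbeta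
  have hTc2pos : 0 < (((P₂ 0)-(P₁ 0))*((P₃ 1)-(P₁ 1))-((P₂ 1)-(P₁ 1))*((P₃ 0)-(P₁ 0)))^2 := by positivity
  -- j ≠ 0 and Φ ≠ 0
  have hj0 : j ≠ 0 := by
    intro h0
    rw [h0] at hR2
    simp only [ne_eq] at hTc0
    nlinarith only [hR2, hTc2pos]
  have hR1' : (2*(s₁*s₂+s₂*s₃+s₃*s₁) - (s₁^2+s₂^2+s₃^2)) + 2*j*(s₁*s₂*s₃) = 0 := by
    have h2 : j^2*((2*(s₁*s₂+s₂*s₃+s₃*s₁) - (s₁^2+s₂^2+s₃^2)) + 2*j*(s₁*s₂*s₃)) = 0 := by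
      have h3 : (a^2*b^2)^3 * (j^2*((2*(s₁*s₂+s₂*s₃+s₃*s₁) - (s₁^2+s₂^2+s₃^2)) + 2*j*(s₁*s₂*s₃))) = (a^2*b^2)^3 * 0 := by
        linear_combination hdet
      exact mul_left_cancel₀ (pow_ne_zero 3 hK0) h3
    rcases mul_eq_zero.mp h2 with h3 | h3
    · exact absurd ((pow_eq_zero_iff (by norm_num : (2:ℕ) ≠ 0)).mp h3) hj0
    · exact h3
  have hPhi0 : (2*(s₁*s₂+s₂*s₃+s₃*s₁) - (s₁^2+s₂^2+s₃^2)) ≠ 0 := by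
    intro h0
    rw [h0] at hR2
    nlinarith only [hR2, hTc2pos]
  -- eliminate: p and q as functions of the sides
  have h1' : (-((s₁^2*s₂+s₁^2*s₃+s₂^2*s₁+s₂^2*s₃+s₃^2*s₁+s₃^2*s₂)-(s₁^3+s₂^3+s₃^3)))*(j*(a^2*b^2)) = ((a^2+b^2)*j*(2*(s₁*s₂+s₂*s₃+s₃*s₁) - (s₁^2+s₂^2+s₃^2)))*(j*(a^2*b^2)) := by
    linear_combination hR3 - (a^2+b^2)*hR2
  have h1'' : -((s₁^2*s₂+s₁^2*s₃+s₂^2*s₁+s₂^2*s₃+s₃^2*s₁+s₃^2*s₂)-(s₁^3+s₂^3+s₃^3)) = (a^2+b^2)*j*(2*(s₁*s₂+s₂*s₃+s₃*s₁) - (s₁^2+s₂^2+s₃^2)) :=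
    mul_right_cancel₀ (mul_ne_zero hj0 hK0) h1'
  have hPhisq : (2*(s₁*s₂+s₂*s₃+s₃*s₁) - (s₁^2+s₂^2+s₃^2))^2 = 4*j^2*(s₁*s₂*s₃)^2 := by
    linear_combination ((2*(s₁*s₂+s₂*s₃+s₃*s₁) - (s₁^2+s₂^2+s₃^2)) - 2*j*(s₁*s₂*s₃))*hR1'
  have hA : (a^2+b^2)*(2*(s₁*s₂+s₂*s₃+s₃*s₁) - (s₁^2+s₂^2+s₃^2))^2 = 2*(s₁*s₂*s₃)*((s₁^2*s₂+s₁^2*s₃+s₂^2*s₁+s₂^2*s₃+s₃^2*s₁+s₃^2*s₂)-(s₁^3+s₂^3+s₃^3)) := by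
    linear_combination (a^2+b^2)*(2*(s₁*s₂+s₂*s₃+s₃*s₁) - (s₁^2+s₂^2+s₃^2))*hR1' + 2*(s₁*s₂*s₃)*h1''
  have hB : (a^2*b^2)*(2*(s₁*s₂+s₂*s₃+s₃*s₁) - (s₁^2+s₂^2+s₃^2))^3 = (2*(s₁^2*s₂^2+s₂^2*s₃^2+s₃^2*s₁^2)-(s₁^4+s₂^4+s₃^4))*(s₁*s₂*s₃)^2 := by
    linear_combination (a^2*b^2)*(2*(s₁*s₂+s₂*s₃+s₃*s₁) - (s₁^2+s₂^2+s₃^2))*hPhisq + 4*(s₁*s₂*s₃)^2*hR2 + (s₁*s₂*s₃)^2*hHeron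
  -- convert to elementary-symmetric form and apply the key identity
  have hPhie : (4*(s₁*s₂+s₂*s₃+s₃*s₁) - (s₁+s₂+s₃)^2) ≠ 0 := by
    intro hc; exact hPhi0 (by linear_combination hc)
  have heA : (a^2+b^2) * (4*(s₁*s₂+s₂*s₃+s₃*s₁) - (s₁+s₂+s₃)^2)^2
      = 2*(s₁*s₂*s₃)*(-(s₁+s₂+s₃)^3+4*(s₁+s₂+s₃)*(s₁*s₂+s₂*s₃+s₃*s₁)-6*(s₁*s₂*s₃)) := by
    linear_combination hA
  have heB : (a^2*b^2) * (4*(s₁*s₂+s₂*s₃+s₃*s₁) - (s₁+s₂+s₃)^2)^3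
      = (s₁+s₂+s₃)*(-(s₁+s₂+s₃)^3+4*(s₁+s₂+s₃)*(s₁*s₂+s₂*s₃+s₃*s₁)-8*(s₁*s₂*s₃))*(s₁*s₂*s₃)^2 := by
    linear_combination hB
  have key := star_identity (s₁+s₂+s₃) (s₁*s₂+s₂*s₃+s₃*s₁) (s₁*s₂*s₃) (a^2+b^2) (a^2*b^2) hPhie heA heB
  -- δ facts
  have hδ0 : 0 ≤ δ := Real.sqrt_nonneg _
  have hδsq : δ^2 = a^4 - a^2*b^2 + b^4 := by
    rw [sq]
    exact Real.mul_self_sqrt (by nlinarith only [sq_nonneg (a^2-b^2), sq_nonneg (a*b)])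
  have hab2 : b^2 < a^2 := by nlinarith only [hb, hab]
  have hδb : b^2 < δ := by nlinarith only [hδsq, hδ0, mul_pos (pow_pos haa 2) (sub_pos.mpr hab2)]
  have hδa : δ < a^2 := by nlinarith only [hδsq, hδ0, mul_pos (pow_pos hb 2) (sub_pos.mpr hab2)]
  -- positivity of triangle factors
  have hF3pos : 0 < ((-s₁+s₂+s₃)*((s₁-s₂+s₃)*(s₁+s₂-s₃))) := by
    have hL : 0 < s₁+s₂+s₃ := by linarith only [hs1p, hs2p, hs3p]
    nlinarith only [hHeron, hTc2pos, hL]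
  have hf1 : 0 < -s₁+s₂+s₃ := by
    by_contra hcon
    push_neg at hcon
    have hg2 : 0 < s₁-s₂+s₃ := by linarith only [hcon, hs1p, hs2p, hs3p]
    have hg3 : 0 < s₁+s₂-s₃ := by linarith only [hcon, hs1p, hs2p, hs3p]
    nlinarith only [hcon, mul_pos hg2 hg3, hF3pos]
  have hf2 : 0 < s₁-s₂+s₃ := by
    by_contra hcon
    push_neg at hcon
    have hg1 : 0 < -s₁+s₂+s₃ := by linarith only [hcon, hs1p, hs2p, hs3p]
    have hg3 : 0 < s₁+s₂-s₃ := by linarith only [hcon, hs1p, hs2p, hs3p]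
    nlinarith only [hcon, mul_pos hg1 hg3, hF3pos]
  have hf3 : 0 < s₁+s₂-s₃ := by
    by_contra hcon
    push_neg at hcon
    have hg1 : 0 < -s₁+s₂+s₃ := by linarith only [hcon, hs1p, hs2p, hs3p]
    have hg2 : 0 < s₁-s₂+s₃ := by linarith only [hcon, hs1p, hs2p, hs3p]
    nlinarith only [hcon, mul_pos hg1 hg2, hF3pos]
  have hf1ne : -s₁+s₂+s₃ ≠ 0 := ne_of_gt hf1
  have hf2ne : s₁-s₂+s₃ ≠ 0 := ne_of_gt hf2
  have hf3ne : s₁+s₂-s₃ ≠ 0 := ne_of_gt hf3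
  have hprodpos : 0 < s₁*s₂*s₃ := mul_pos (mul_pos hs1p hs2p) hs3p
  -- X = Y
  have hYpos : 0 < 4*(s₁*s₂*s₃)*((a^2+b^2)^2-2*(a^2*b^2))
      + ((a^2+b^2)^2-4*(a^2*b^2))*(-(s₁+s₂+s₃)^3+4*(s₁+s₂+s₃)*(s₁*s₂+s₂*s₃+s₃*s₁)-8*(s₁*s₂*s₃)) := by
    have t1 : 0 < 4*(s₁*s₂*s₃)*((a^2+b^2)^2-2*(a^2*b^2)) := by
      have hq2 : 0 < (a^2+b^2)^2-2*(a^2*b^2) := by nlinarith only [pow_pos haa 4, pow_pos hb 4]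
      have hprodpos : 0 < s₁*s₂*s₃ := mul_pos (mul_pos hs1p hs2p) hs3p
      nlinarith only [mul_pos hprodpos hq2]
    have t2 : 0 < ((a^2+b^2)^2-4*(a^2*b^2))*(-(s₁+s₂+s₃)^3+4*(s₁+s₂+s₃)*(s₁*s₂+s₂*s₃+s₃*s₁)-8*(s₁*s₂*s₃)) := by
      have hc4 : 0 < (a^2+b^2)^2-4*(a^2*b^2) := by nlinarith only [pow_pos (sub_pos.mpr hab2) 2]
      have hc5 : 0 < -(s₁+s₂+s₃)^3+4*(s₁+s₂+s₃)*(s₁*s₂+s₂*s₃+s₃*s₁)-8*(s₁*s₂*s₃) := by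
        nlinarith only [hF3pos]
      exact mul_pos hc4 hc5
    linarith only [t1, t2]
  have hXY : 4*(s₁*s₂*s₃)*((a^2+b^2)*δ) = 4*(s₁*s₂*s₃)*((a^2+b^2)^2-2*(a^2*b^2))
      + ((a^2+b^2)^2-4*(a^2*b^2))*(-(s₁+s₂+s₃)^3+4*(s₁+s₂+s₃)*(s₁*s₂+s₂*s₃+s₃*s₁)-8*(s₁*s₂*s₃)) := by
    have hsqeq : (4*(s₁*s₂*s₃)*((a^2+b^2)*δ))^2 = (4*(s₁*s₂*s₃)*((a^2+b^2)^2-2*(a^2*b^2))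
        + ((a^2+b^2)^2-4*(a^2*b^2))*(-(s₁+s₂+s₃)^3+4*(s₁+s₂+s₃)*(s₁*s₂+s₂*s₃+s₃*s₁)-8*(s₁*s₂*s₃)))^2 := by
      linear_combination 16*(s₁*s₂*s₃)^2*(a^2+b^2)^2*hδsq + key
    have hδpos : 0 < δ := lt_trans (by positivity) hδb
    have hXpos : 0 ≤ 4*(s₁*s₂*s₃)*((a^2+b^2)*δ) := by
      have hprodpos : 0 < s₁*s₂*s₃ := mul_pos (mul_pos hs1p hs2p) hs3p
      have hpq : (0:ℝ) < a^2+b^2 := by positivity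
      nlinarith only [mul_pos (mul_pos hprodpos hδpos) hpq]
    have hfac : (4*(s₁*s₂*s₃)*((a^2+b^2)*δ) - (4*(s₁*s₂*s₃)*((a^2+b^2)^2-2*(a^2*b^2))
        + ((a^2+b^2)^2-4*(a^2*b^2))*(-(s₁+s₂+s₃)^3+4*(s₁+s₂+s₃)*(s₁*s₂+s₂*s₃+s₃*s₁)-8*(s₁*s₂*s₃))))
        * (4*(s₁*s₂*s₃)*((a^2+b^2)*δ) + (4*(s₁*s₂*s₃)*((a^2+b^2)^2-2*(a^2*b^2))
        + ((a^2+b^2)^2-4*(a^2*b^2))*(-(s₁+s₂+s₃)^3+4*(s₁+s₂+s₃)*(s₁*s₂+s₂*s₃+s₃*s₁)-8*(s₁*s₂*s₃)))) = 0 := by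
      linear_combination hsqeq
    rcases mul_eq_zero.mp hfac with hz | hz
    · linarith only [hz]
    · linarith only [hz, hXpos, hYpos]
  have hfin : 4*(s₁*s₂*s₃)*((δ-b^2)*(a^2-δ)) = (a^2-b^2)^2*((-s₁+s₂+s₃)*((s₁-s₂+s₃)*(s₁+s₂-s₃))) := by
    linear_combination hXY - 4*(s₁*s₂*s₃)*hδsq
  -- area computations
  have hcE : ((E₂ - E₁) 0) * ((E₃ - E₁) 1) - ((E₂ - E₁) 1) * ((E₃ - E₁) 0)
      = (4*(s₁*s₂*s₃)/((-s₁+s₂+s₃)*((s₁-s₂+s₃)*(s₁+s₂-s₃)))) * (((P₂ 0)-(P₁ 0))*((P₃ 1)-(P₁ 1))-((P₂ 1)-(P₁ 1))*((P₃ 0)-(P₁ 0))) := by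
    show (((s₁ - s₂ + s₃)⁻¹ • (s₁ • P₁ + (-s₂) • P₂ + s₃ • P₃)
        - (-s₁ + s₂ + s₃)⁻¹ • ((-s₁) • P₁ + s₂ • P₂ + s₃ • P₃)) 0)
      * (((s₁ + s₂ - s₃)⁻¹ • (s₁ • P₁ + s₂ • P₂ + (-s₃) • P₃)
        - (-s₁ + s₂ + s₃)⁻¹ • ((-s₁) • P₁ + s₂ • P₂ + s₃ • P₃)) 1)
      - (((s₁ - s₂ + s₃)⁻¹ • (s₁ • P₁ + (-s₂) • P₂ + s₃ • P₃)
        - (-s₁ + s₂ + s₃)⁻¹ • ((-s₁) • P₁ + s₂ • P₂ + s₃ • P₃)) 1)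
      * (((s₁ + s₂ - s₃)⁻¹ • (s₁ • P₁ + s₂ • P₂ + (-s₃) • P₃)
        - (-s₁ + s₂ + s₃)⁻¹ • ((-s₁) • P₁ + s₂ • P₂ + s₃ • P₃)) 0) = _
    simp only [PiLp.sub_apply, PiLp.smul_apply, PiLp.add_apply, smul_eq_mul]
    linear_combination exc_cross (P₁ 0) (P₁ 1) (P₂ 0) (P₂ 1) (P₃ 0) (P₃ 1) s₁ s₂ s₃ hf1ne hf2ne hf3ne
  have hcQ : ((Q₂ - Q₁) 0) * ((Q₃ - Q₁) 1) - ((Q₂ - Q₁) 1) * ((Q₃ - Q₁) 0)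
      = ((-s₁+s₂+s₃)*((s₁-s₂+s₃)*(s₁+s₂-s₃))/(4*(s₁*s₂*s₃))) * (((P₂ 0)-(P₁ 0))*((P₃ 1)-(P₁ 1))-((P₂ 1)-(P₁ 1))*((P₃ 0)-(P₁ 0))) := by
    show (((P₃ + (((s₁+s₂+s₃) / 2 - s₁) / s₂) • (P₁ - P₃))
        - (P₂ + (((s₁+s₂+s₃) / 2 - s₃) / s₁) • (P₃ - P₂))) 0)
      * (((P₁ + (((s₁+s₂+s₃) / 2 - s₂) / s₃) • (P₂ - P₁))
        - (P₂ + (((s₁+s₂+s₃) / 2 - s₃) / s₁) • (P₃ - P₂))) 1)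
      - (((P₃ + (((s₁+s₂+s₃) / 2 - s₁) / s₂) • (P₁ - P₃))
        - (P₂ + (((s₁+s₂+s₃) / 2 - s₃) / s₁) • (P₃ - P₂))) 1)
      * (((P₁ + (((s₁+s₂+s₃) / 2 - s₂) / s₃) • (P₂ - P₁))
        - (P₂ + (((s₁+s₂+s₃) / 2 - s₃) / s₁) • (P₃ - P₂))) 0) = _
    simp only [PiLp.sub_apply, PiLp.smul_apply, PiLp.add_apply, smul_eq_mul]
    linear_combination ext_cross (P₁ 0) (P₁ 1) (P₂ 0) (P₂ 1) (P₃ 0) (P₃ 1) s₁ s₂ s₃ hs1ne hs2ne hs3ne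
  have hkpos : 0 < 4*(s₁*s₂*s₃)/((-s₁+s₂+s₃)*((s₁-s₂+s₃)*(s₁+s₂-s₃))) :=
    div_pos (by linarith only [hprodpos]) hF3pos
  have hkpos' : 0 < (-s₁+s₂+s₃)*((s₁-s₂+s₃)*(s₁+s₂-s₃))/(4*(s₁*s₂*s₃)) :=
    div_pos hF3pos (by linarith only [hprodpos])
  have hA'v : A' = (4*(s₁*s₂*s₃)/((-s₁+s₂+s₃)*((s₁-s₂+s₃)*(s₁+s₂-s₃)))) * |(((P₂ 0)-(P₁ 0))*((P₃ 1)-(P₁ 1))-((P₂ 1)-(P₁ 1))*((P₃ 0)-(P₁ 0)))| / 2 := by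
    show |((E₂ - E₁) 0) * ((E₃ - E₁) 1) - ((E₂ - E₁) 1) * ((E₃ - E₁) 0)| / 2 = _
    rw [hcE, abs_mul, abs_of_pos hkpos]
  have hA''v : A'' = ((-s₁+s₂+s₃)*((s₁-s₂+s₃)*(s₁+s₂-s₃))/(4*(s₁*s₂*s₃))) * |(((P₂ 0)-(P₁ 0))*((P₃ 1)-(P₁ 1))-((P₂ 1)-(P₁ 1))*((P₃ 0)-(P₁ 0)))| / 2 := by
    show |((Q₂ - Q₁) 0) * ((Q₃ - Q₁) 1) - ((Q₂ - Q₁) 1) * ((Q₃ - Q₁) 0)| / 2 = _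
    rw [hcQ, abs_mul, abs_of_pos hkpos']
  have habs : 0 < |(((P₂ 0)-(P₁ 0))*((P₃ 1)-(P₁ 1))-((P₂ 1)-(P₁ 1))*((P₃ 0)-(P₁ 0)))| := abs_pos.mpr hTc0
  have habsne : |((P₂ 0)-(P₁ 0))*((P₃ 1)-(P₁ 1))-((P₂ 1)-(P₁ 1))*((P₃ 0)-(P₁ 0))| ≠ 0 :=
    ne_of_gt habs
  have hA''pos : 0 < A'' := by
    rw [hA''v]
    exact div_pos (mul_pos hkpos' habs) two_pos
  have hratio : A' / A'' = (4*(s₁*s₂*s₃)/((-s₁+s₂+s₃)*((s₁-s₂+s₃)*(s₁+s₂-s₃))))^2 := by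
    rw [div_eq_iff (ne_of_gt hA''pos), hA'v, hA''v]
    field_simp
  have hDD : 0 < (δ - b^2)*(a^2 - δ) := mul_pos (sub_pos.mpr hδb) (sub_pos.mpr hδa)
  have hkeq : 4*(s₁*s₂*s₃)/((-s₁+s₂+s₃)*((s₁-s₂+s₃)*(s₁+s₂-s₃)))
      = (a^2-b^2)^2/((δ-b^2)*(a^2-δ)) := by
    rw [div_eq_div_iff (by positivity) (ne_of_gt hDD)]
    linear_combination hfin
  rw [hratio, hkeq]
end
end

section
/- For every 3-periodic billiard orbit P₁P₂P₃ in the ellipse E, the symmedian point of its excentral triangle (which is the Mittenpunkt of the orbit, and the center of the excentral triangle's cosine circle) is the center of the billiard: (s′₁²·E₁ + s′₂²·E₂ + s′₃²·E₃)/(s′₁² + s′₂² + s′₃²) = (0, 0). -/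
noncomputable section

open EuclideanGeometry Real

/-- Three "collinear" points on the ellipse: contradiction. -/
lemma collinear_contra (A B c px py qx qy rx ry : ℝ) (hA : A ≠ 0) (hB : B ≠ 0)
    (hep : px^2/A + py^2/B = 1) (heq : qx^2/A + qy^2/B = 1) (her : rx^2/A + ry^2/B = 1)
    (hApos : 0 < A) (hBpos : 0 < B)
    (hpq : (qx-px)^2 + (qy-py)^2 ≠ 0)
    (hqr : (rx-qx)^2 + (ry-qy)^2 ≠ 0)
    (hrp : (rx-px)^2 + (ry-py)^2 ≠ 0)
    (h1 : rx - px = c*(qx-px)) (h2 : ry - py = c*(qy-py)) : False := by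
  by_cases hc : c = 0
  · subst hc
    apply hrp
    simp only [zero_mul] at h1 h2
    rw [h1, h2]; ring
  have e1 : (qx-px)*(qx+px)/A + (qy-py)*(qy+py)/B = 0 := by
    linear_combination heq - hep
  have e2' : (rx-px)*(rx+px)/A + (ry-py)*(ry+py)/B = 0 := by
    linear_combination her - hep
  have e2c : c * ((qx-px)*(rx+px)/A + (qy-py)*(ry+py)/B) = 0 := by
    linear_combination e2' - ((rx+px)/A)*h1 - ((ry+py)/B)*h2
  have e2 : (qx-px)*(rx+px)/A + (qy-py)*(ry+py)/B = 0 :=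
    (mul_eq_zero.mp e2c).resolve_left hc
  by_cases hc1 : c = 1
  · subst hc1
    apply hqr
    simp only [one_mul] at h1 h2
    have : rx - qx = 0 := by linarith
    have h2' : ry - qy = 0 := by linarith
    rw [this, h2']; ring
  have e3 : (c-1) * ((qx-px)^2/A + (qy-py)^2/B) = 0 := by
    linear_combination e2 - e1 - ((qx-px)/A)*h1 - ((qy-py)/B)*h2
  have e4 : (qx-px)^2/A + (qy-py)^2/B = 0 := by
    rcases mul_eq_zero.mp e3 with h | h
    · exact absurd (by linarith : c = 1) hc1
    · exact h
  apply hpq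
  have t1 : 0 ≤ (qx-px)^2/A := div_nonneg (sq_nonneg _) hApos.le
  have t2 : 0 ≤ (qy-py)^2/B := div_nonneg (sq_nonneg _) hBpos.le
  have hxA : (qx-px)^2/A = 0 := by linarith
  have hyB : (qy-py)^2/B = 0 := by linarith
  have hx : (qx-px)^2 = 0 := (div_eq_zero_iff.mp hxA).resolve_right hA
  have hy : (qy-py)^2 = 0 := (div_eq_zero_iff.mp hyB).resolve_right hB
  rw [hx, hy]; ring

lemma refl_step (A B px py qx qy rx ry dq dr du : ℝ)
    (hApos : 0 < A) (hBpos : 0 < B)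
    (hep : px^2/A + py^2/B = 1) (heq : qx^2/A + qy^2/B = 1) (her : rx^2/A + ry^2/B = 1)
    (hdq : dq^2 = (qx-px)^2 + (qy-py)^2) (hdqp : 0 < dq)
    (hdr : dr^2 = (rx-px)^2 + (ry-py)^2) (hdrp : 0 < dr)
    (hdu : du^2 = (rx-qx)^2 + (ry-qy)^2) (hdup : 0 < du)
    (href : (dq⁻¹*(qx-px) + dr⁻¹*(rx-px))*(-py/B) + (dq⁻¹*(qy-py) + dr⁻¹*(ry-py))*(px/A) = 0) :
    dr*(1 - (px*qx/A + py*qy/B)) = dq*(1 - (px*rx/A + py*ry/B)) := by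
  have hA : A ≠ 0 := hApos.ne'
  have hB : B ≠ 0 := hBpos.ne'
  have hdq0 : dq ≠ 0 := hdqp.ne'
  have hdr0 : dr ≠ 0 := hdrp.ne'
  set vx := dq⁻¹*(qx-px) + dr⁻¹*(rx-px) with hvx
  set vy := dq⁻¹*(qy-py) + dr⁻¹*(ry-py) with hvy
  set wx := dq⁻¹*(qx-px) - dr⁻¹*(rx-px) with hwx
  set wy := dq⁻¹*(qy-py) - dr⁻¹*(ry-py) with hwy
  have hcross : vx*(py/B) - vy*(px/A) = 0 := by linear_combination -href
  have hwv : wx*vx + wy*vy = 0 := by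
    rw [hvx, hvy, hwx, hwy]
    field_simp
    linear_combination dq^2*hdr - dr^2*hdq
  have hkey : (wx*(px/A) + wy*(py/B))*(vx^2 + vy^2) = 0 := by
    linear_combination (vx*(px/A) + vy*(py/B))*hwv + (vx*wy - vy*wx)*hcross
  rcases mul_eq_zero.mp hkey with hpn | hv0
  · rw [hwx, hwy] at hpn
    field_simp at hpn
    have hpn2 : dq*dr*(B*(px*((qx-px)*dr - dq*(rx-px))) + A*(py*((qy-py)*dr - dq*(ry-py)))) = 0 := by
      linear_combination dq*dr*hpn
    have hdqdr : dq*dr ≠ 0 := mul_ne_zero hdq0 hdr0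
    have hpn3 : B*(px*((qx-px)*dr - dq*(rx-px))) + A*(py*((qy-py)*dr - dq*(ry-py))) = 0 :=
      (mul_eq_zero.mp hpn2).resolve_left hdqdr
    have hep' : B*px^2 + A*py^2 = A*B := by
      field_simp at hep
      linarith
    have goal2 : A*B*dr - B*px*qx*dr - A*py*qy*dr = A*B*dq - B*px*rx*dq - A*py*ry*dq := by
      linear_combination (-1)*hpn3 - (dr-dq)*hep'
    field_simp
    linear_combination goal2
  · have t1 : 0 ≤ vx^2 := sq_nonneg vx
    have t2 : 0 ≤ vy^2 := sq_nonneg vy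
    have hx2 : vx^2 = 0 := by linarith
    have hy2 : vy^2 = 0 := by linarith
    have hx0 : vx = 0 := sq_eq_zero_iff.mp hx2
    have hy0 : vy = 0 := sq_eq_zero_iff.mp hy2
    rw [hvx] at hx0
    rw [hvy] at hy0
    exfalso
    have h1 : rx - px = (-(dr/dq))*(qx-px) := by
      field_simp at hx0 ⊢
      linarith
    have h2 : ry - py = (-(dr/dq))*(qy-py) := by
      field_simp at hy0 ⊢
      linarith
    have npq : (qx-px)^2 + (qy-py)^2 ≠ 0 := by rw [← hdq]; positivity
    have nqr : (rx-qx)^2 + (ry-qy)^2 ≠ 0 := by rw [← hdu]; positivity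
    have nrp : (rx-px)^2 + (ry-py)^2 ≠ 0 := by rw [← hdr]; positivity
    exact collinear_contra A B (-(dr/dq)) px py qx qy rx ry hA hB hep heq her hApos hBpos npq nqr nrp h1 h2

/-- strict triangle inequality for triangles inscribed in the ellipse -/
lemma sigma_ne (A B px py qx qy rx ry u v w : ℝ)
    (hApos : 0 < A) (hBpos : 0 < B)
    (hep : px^2/A + py^2/B = 1) (heq : qx^2/A + qy^2/B = 1) (her : rx^2/A + ry^2/B = 1)
    (hu : u^2 = (rx-qx)^2 + (ry-qy)^2) (hup : 0 < u)
    (hv : v^2 = (rx-px)^2 + (ry-py)^2) (hvp : 0 < v)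
    (hw : w^2 = (qx-px)^2 + (qy-py)^2) (hwp : 0 < w) :
    -u + v + w ≠ 0 := by
  intro h0
  have hd : 2*((rx-qx)*(px-qx) + (ry-qy)*(py-qy)) = u^2 + w^2 - v^2 := by
    linear_combination hv - hu - hw
  have h_id : (w*(rx-qx) - u*(px-qx))^2 + (w*(ry-qy) - u*(py-qy))^2
      = u*w*(u+v-w)*(-u+v+w) := by
    linear_combination (-(w^2))*hu - u^2*hw - u*w*hd
  have hz : (w*(rx-qx) - u*(px-qx))^2 + (w*(ry-qy) - u*(py-qy))^2 = 0 := by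
    linear_combination h_id + (u*w*(u+v-w))*h0
  have t1 : 0 ≤ (w*(rx-qx) - u*(px-qx))^2 := sq_nonneg _
  have t2 : 0 ≤ (w*(ry-qy) - u*(py-qy))^2 := sq_nonneg _
  have hx2 : (w*(rx-qx) - u*(px-qx))^2 = 0 := by linarith
  have hy2 : (w*(ry-qy) - u*(py-qy))^2 = 0 := by linarith
  have hx : w*(rx-qx) - u*(px-qx) = 0 := sq_eq_zero_iff.mp hx2
  have hy : w*(ry-qy) - u*(py-qy) = 0 := sq_eq_zero_iff.mp hy2
  have hu0 : u ≠ 0 := hup.ne'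
  have h1 : px - qx = (w/u)*(rx-qx) := by field_simp; linarith
  have h2 : py - qy = (w/u)*(ry-qy) := by field_simp; linarith
  have n1 : (rx-qx)^2 + (ry-qy)^2 ≠ 0 := by rw [← hu]; positivity
  have n2 : (px-rx)^2 + (py-ry)^2 ≠ 0 := by
    have : (px-rx)^2 + (py-ry)^2 = v^2 := by rw [hv]; ring
    rw [this]; positivity
  have n3 : (px-qx)^2 + (py-qy)^2 ≠ 0 := by
    have : (px-qx)^2 + (py-qy)^2 = w^2 := by rw [hw]; ring
    rw [this]; positivity
  exact collinear_contra A B (w/u) qx qy rx ry px py hApos.ne' hBpos.ne'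
    heq her hep hApos hBpos n1 n2 n3 h1 h2

lemma sum_div_sq_zero (A B a b : ℝ) (hA : 0 < A) (hB : 0 < B)
    (h : a^2/A + b^2/B = 0) : a = 0 ∧ b = 0 := by
  have t1 : 0 ≤ a^2/A := div_nonneg (sq_nonneg _) hA.le
  have t2 : 0 ≤ b^2/B := div_nonneg (sq_nonneg _) hB.le
  have h1 : a^2/A = 0 := by linarith
  have h2 : b^2/B = 0 := by linarith
  exact ⟨sq_eq_zero_iff.mp ((div_eq_zero_iff.mp h1).resolve_right hA.ne'),
         sq_eq_zero_iff.mp ((div_eq_zero_iff.mp h2).resolve_right hB.ne')⟩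

lemma mitt_core (A B x1 y1 x2 y2 x3 y3 s1 s2 s3 : ℝ)
    (hApos : 0 < A) (hBpos : 0 < B)
    (he1 : x1^2/A + y1^2/B = 1) (he2 : x2^2/A + y2^2/B = 1) (he3 : x3^2/A + y3^2/B = 1)
    (hs1 : s1^2 = (x3-x2)^2 + (y3-y2)^2) (hs1p : 0 < s1)
    (hs2 : s2^2 = (x1-x3)^2 + (y1-y3)^2) (hs2p : 0 < s2)
    (hs3 : s3^2 = (x2-x1)^2 + (y2-y1)^2) (hs3p : 0 < s3)
    (hg1 : s2*(1 - (x1*x2/A + y1*y2/B)) = s3*(1 - (x1*x3/A + y1*y3/B)))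
    (hg2 : s3*(1 - (x2*x3/A + y2*y3/B)) = s1*(1 - (x2*x1/A + y2*y1/B)))
    (hg3 : s1*(1 - (x3*x1/A + y3*y1/B)) = s2*(1 - (x3*x2/A + y3*y2/B))) :
    s1*(-s1+s2+s3)*x1 + s2*(s1-s2+s3)*x2 + s3*(s1+s2-s3)*x3 = 0
    ∧ s1*(-s1+s2+s3)*y1 + s2*(s1-s2+s3)*y2 + s3*(s1+s2-s3)*y3 = 0 := by
  have hA : A ≠ 0 := hApos.ne'
  have hB : B ≠ 0 := hBpos.ne'
  have hs10 : s1 ≠ 0 := hs1p.ne'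
  have hs20 : s2 ≠ 0 := hs2p.ne'
  have hs30 : s3 ≠ 0 := hs3p.ne'
  obtain ⟨J, e12⟩ : ∃ J : ℝ, x1*x2/A + y1*y2/B = 1 - J*s3 :=
    ⟨(1 - (x1*x2/A + y1*y2/B))/s3, by field_simp; ring⟩
  have e13 : x1*x3/A + y1*y3/B = 1 - J*s2 := by
    have h : s3*(x1*x3/A + y1*y3/B) = s3*(1 - J*s2) := by
      linear_combination hg1 + s2*e12
    have := mul_left_cancel₀ hs30 h
    linarith [this]
  have e23 : x2*x3/A + y2*y3/B = 1 - J*s1 := by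
    have h : s3*(x2*x3/A + y2*y3/B) = s3*(1 - J*s1) := by
      linear_combination -hg2 + s1*e12
    have := mul_left_cancel₀ hs30 h
    linarith [this]
  have hJ0 : J ≠ 0 := by
    intro h0
    rw [h0] at e12
    have hz : (x1-x2)^2/A + (y1-y2)^2/B = 0 := by
      linear_combination he1 + he2 - 2*e12
    obtain ⟨hx, hy⟩ := sum_div_sq_zero A B _ _ hApos hBpos hz
    have : s3^2 = 0 := by rw [hs3]; linear_combination (x1-x2)*hx + (y1-y2)*hy
    exact hs30 (sq_eq_zero_iff.mp this)
  -- Gram determinant of the three points w.r.t. the ellipse form vanishes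
  have hG : (x1^2/A + y1^2/B)*((x2^2/A + y2^2/B)*(x3^2/A + y3^2/B) - (x2*x3/A + y2*y3/B)^2)
      - (x1*x2/A + y1*y2/B)*((x1*x2/A + y1*y2/B)*(x3^2/A + y3^2/B) - (x2*x3/A + y2*y3/B)*(x1*x3/A + y1*y3/B))
      + (x1*x3/A + y1*y3/B)*((x1*x2/A + y1*y2/B)*(x2*x3/A + y2*y3/B) - (x2^2/A + y2^2/B)*(x1*x3/A + y1*y3/B)) = 0 := by
    field_simp
    ring
  rw [he1, he2, he3, e12, e13, e23] at hG
  have hK : 2*(s1*s2+s2*s3+s3*s1) - s1^2 - s2^2 - s3^2 = 2*J*s1*s2*s3 := by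
    have hfac : J^2*((2*(s1*s2+s2*s3+s3*s1) - s1^2 - s2^2 - s3^2) - 2*J*s1*s2*s3) = 0 := by
      linear_combination hG
    have := (mul_eq_zero.mp hfac).resolve_left (pow_ne_zero 2 hJ0)
    linarith [this]
  -- the Mittenpunkt combination is E-orthogonal to each vertex
  have hW1 : (s1*(-s1+s2+s3)*x1 + s2*(s1-s2+s3)*x2 + s3*(s1+s2-s3)*x3)*(x1/A)
      + (s1*(-s1+s2+s3)*y1 + s2*(s1-s2+s3)*y2 + s3*(s1+s2-s3)*y3)*(y1/B) = 0 := by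
    linear_combination (s1*(-s1+s2+s3))*he1 + (s2*(s1-s2+s3))*e12 + (s3*(s1+s2-s3))*e13 + hK
  have hW2 : (s1*(-s1+s2+s3)*x1 + s2*(s1-s2+s3)*x2 + s3*(s1+s2-s3)*x3)*(x2/A)
      + (s1*(-s1+s2+s3)*y1 + s2*(s1-s2+s3)*y2 + s3*(s1+s2-s3)*y3)*(y2/B) = 0 := by
    linear_combination (s2*(s1-s2+s3))*he2 + (s1*(-s1+s2+s3))*e12 + (s3*(s1+s2-s3))*e23 + hK
  have hW3 : (s1*(-s1+s2+s3)*x1 + s2*(s1-s2+s3)*x2 + s3*(s1+s2-s3)*x3)*(x3/A)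
      + (s1*(-s1+s2+s3)*y1 + s2*(s1-s2+s3)*y2 + s3*(s1+s2-s3)*y3)*(y3/B) = 0 := by
    linear_combination (s3*(s1+s2-s3))*he3 + (s1*(-s1+s2+s3))*e13 + (s2*(s1-s2+s3))*e23 + hK
  set Wx := s1*(-s1+s2+s3)*x1 + s2*(s1-s2+s3)*x2 + s3*(s1+s2-s3)*x3 with hWxdef
  set Wy := s1*(-s1+s2+s3)*y1 + s2*(s1-s2+s3)*y2 + s3*(s1+s2-s3)*y3 with hWydef
  by_contra hc
  rw [not_and_or] at hc
  -- from nonvanishing, the three points lie on a line through the origin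
  have hD12 : x1*y2 - x2*y1 = 0 := by
    have hDA : Wx*((x1*y2 - x2*y1)/A) = 0 := by linear_combination y2*hW1 - y1*hW2
    have hDB : Wy*((x1*y2 - x2*y1)/B) = 0 := by linear_combination x1*hW2 - x2*hW1
    rcases hc with h | h
    · have := (mul_eq_zero.mp hDA).resolve_left h
      exact (div_eq_zero_iff.mp this).resolve_right hA
    · have := (mul_eq_zero.mp hDB).resolve_left h
      exact (div_eq_zero_iff.mp this).resolve_right hB
  have hD13 : x1*y3 - x3*y1 = 0 := by
    have hDA : Wx*((x1*y3 - x3*y1)/A) = 0 := by linear_combination y3*hW1 - y1*hW3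
    have hDB : Wy*((x1*y3 - x3*y1)/B) = 0 := by linear_combination x1*hW3 - x3*hW1
    rcases hc with h | h
    · have := (mul_eq_zero.mp hDA).resolve_left h
      exact (div_eq_zero_iff.mp this).resolve_right hA
    · have := (mul_eq_zero.mp hDB).resolve_left h
      exact (div_eq_zero_iff.mp this).resolve_right hB
  -- Cauchy–Schwarz equality forces antipodal points
  have anti : ∀ u vx vy : ℝ, x1*vx/A + y1*vy/B = 1 - J*u → u ≠ 0 →
      x1*vy - vx*y1 = 0 → vx^2/A + vy^2/B = 1 → vx = -x1 ∧ vy = -y1 := by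
    intro u vx vy hq hu0 hD hev
    have hL : (x1^2/A + y1^2/B)*(vx^2/A + vy^2/B) - (x1*vx/A + y1*vy/B)^2
        = (x1*vy - vx*y1)^2/(A*B) := by field_simp; ring
    rw [he1, hev, hq, hD] at hL
    have hJu : J*u*(2 - J*u) = 0 := by linear_combination hL
    have h2 : J*u = 2 := by
      rcases mul_eq_zero.mp hJu with h | h
      · exact absurd h (mul_ne_zero hJ0 hu0)
      · linarith
    have hz : (x1+vx)^2/A + (y1+vy)^2/B = 0 := by
      linear_combination he1 + hev + 2*hq - 2*h2
    obtain ⟨hx, hy⟩ := sum_div_sq_zero A B _ _ hApos hBpos hz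
    constructor <;> linarith
  obtain ⟨hx2, hy2⟩ := anti s3 x2 y2 e12 hs30 hD12 he2
  obtain ⟨hx3, hy3⟩ := anti s2 x3 y3 e13 hs20 hD13 he3
  have : s1^2 = 0 := by rw [hs1, hx2, hy2, hx3, hy3]; ring
  exact hs10 (sq_eq_zero_iff.mp this)

lemma norm_sq_coord (v : Pt) : ‖v‖^2 = (v 0)^2 + (v 1)^2 := by
  rw [EuclideanSpace.norm_eq, Real.sq_sqrt (by positivity)]
  simp [Fin.sum_univ_two, sq_abs]

set_option maxHeartbeats 2000000 in
/-- The symmedian point of the excentral triangle is the billiard center. -/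
theorem excentral_symmedian_at_center (a b : ℝ) (hb : 0 < b) (hab : b < a)
    (P₁ P₂ P₃ : Pt) (h : IsOrbit a b P₁ P₂ P₃) :
    let s₁ := ‖P₃ - P₂‖
    let s₂ := ‖P₁ - P₃‖
    let s₃ := ‖P₂ - P₁‖
    let E₁ : Pt := (-s₁ + s₂ + s₃)⁻¹ • ((-s₁) • P₁ + s₂ • P₂ + s₃ • P₃)
    let E₂ : Pt := (s₁ - s₂ + s₃)⁻¹ • (s₁ • P₁ + (-s₂) • P₂ + s₃ • P₃)
    let E₃ : Pt := (s₁ + s₂ - s₃)⁻¹ • (s₁ • P₁ + s₂ • P₂ + (-s₃) • P₃)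
    let t₁ := ‖E₃ - E₂‖
    let t₂ := ‖E₁ - E₃‖
    let t₃ := ‖E₂ - E₁‖
    (t₁ ^ 2 + t₂ ^ 2 + t₃ ^ 2)⁻¹ • (t₁ ^ 2 • E₁ + t₂ ^ 2 • E₂ + t₃ ^ 2 • E₃) =
      (0 : Pt) := by
  obtain ⟨h12, h23, h13, he1, he2, he3, hr1, hr2, hr3⟩ := h
  intro s₁ s₂ s₃ E₁ E₂ E₃ t₁ t₂ t₃
  have ha : (0:ℝ) < a := hb.trans hab
  have hApos : (0:ℝ) < a^2 := by positivity
  have hBpos : (0:ℝ) < b^2 := by positivity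
  -- coordinates
  have he1' : (P₁ 0)^2/a^2 + (P₁ 1)^2/b^2 = 1 := he1
  have he2' : (P₂ 0)^2/a^2 + (P₂ 1)^2/b^2 = 1 := he2
  have he3' : (P₃ 0)^2/a^2 + (P₃ 1)^2/b^2 = 1 := he3
  -- side lengths
  have hs1p : 0 < s₁ := norm_pos_iff.mpr (sub_ne_zero.mpr h23.symm)
  have hs2p : 0 < s₂ := norm_pos_iff.mpr (sub_ne_zero.mpr h13)
  have hs3p : 0 < s₃ := norm_pos_iff.mpr (sub_ne_zero.mpr h12.symm)
  have hs1 : s₁^2 = (P₃ 0 - P₂ 0)^2 + (P₃ 1 - P₂ 1)^2 := by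
    show ‖P₃ - P₂‖^2 = _
    rw [norm_sq_coord]
    simp [PiLp.sub_apply]
  have hs2 : s₂^2 = (P₁ 0 - P₃ 0)^2 + (P₁ 1 - P₃ 1)^2 := by
    show ‖P₁ - P₃‖^2 = _
    rw [norm_sq_coord]
    simp [PiLp.sub_apply]
  have hs3 : s₃^2 = (P₂ 0 - P₁ 0)^2 + (P₂ 1 - P₁ 1)^2 := by
    show ‖P₂ - P₁‖^2 = _
    rw [norm_sq_coord]
    simp [PiLp.sub_apply]
  have hn31 : ‖P₃ - P₁‖ = s₂ := norm_sub_rev _ _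
  have hn12 : ‖P₁ - P₂‖ = s₃ := norm_sub_rev _ _
  have hn23 : ‖P₂ - P₃‖ = s₁ := norm_sub_rev _ _
  have hs2' : ‖P₃ - P₁‖^2 = (P₃ 0 - P₁ 0)^2 + (P₃ 1 - P₁ 1)^2 := by
    rw [norm_sq_coord]; simp [PiLp.sub_apply]
  have hs3' : ‖P₁ - P₂‖^2 = (P₁ 0 - P₂ 0)^2 + (P₁ 1 - P₂ 1)^2 := by
    rw [norm_sq_coord]; simp [PiLp.sub_apply]
  have hs1' : ‖P₂ - P₃‖^2 = (P₂ 0 - P₃ 0)^2 + (P₂ 1 - P₃ 1)^2 := by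
    rw [norm_sq_coord]; simp [PiLp.sub_apply]
  -- reflection hypotheses in coordinates
  have hr1' : (‖P₂ - P₁‖⁻¹*(P₂ 0 - P₁ 0) + ‖P₃ - P₁‖⁻¹*(P₃ 0 - P₁ 0))*(-(P₁ 1)/b^2)
      + (‖P₂ - P₁‖⁻¹*(P₂ 1 - P₁ 1) + ‖P₃ - P₁‖⁻¹*(P₃ 1 - P₁ 1))*((P₁ 0)/a^2) = 0 := by
    have h0 := hr1
    unfold reflects at h0
    simpa [PiLp.add_apply, PiLp.smul_apply, PiLp.sub_apply, smul_eq_mul] using h0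
  have hr2' : (‖P₃ - P₂‖⁻¹*(P₃ 0 - P₂ 0) + ‖P₁ - P₂‖⁻¹*(P₁ 0 - P₂ 0))*(-(P₂ 1)/b^2)
      + (‖P₃ - P₂‖⁻¹*(P₃ 1 - P₂ 1) + ‖P₁ - P₂‖⁻¹*(P₁ 1 - P₂ 1))*((P₂ 0)/a^2) = 0 := by
    have h0 := hr2
    unfold reflects at h0
    simpa [PiLp.add_apply, PiLp.smul_apply, PiLp.sub_apply, smul_eq_mul] using h0
  have hr3' : (‖P₁ - P₃‖⁻¹*(P₁ 0 - P₃ 0) + ‖P₂ - P₃‖⁻¹*(P₂ 0 - P₃ 0))*(-(P₃ 1)/b^2)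
      + (‖P₁ - P₃‖⁻¹*(P₁ 1 - P₃ 1) + ‖P₂ - P₃‖⁻¹*(P₂ 1 - P₃ 1))*((P₃ 0)/a^2) = 0 := by
    have h0 := hr3
    unfold reflects at h0
    simpa [PiLp.add_apply, PiLp.smul_apply, PiLp.sub_apply, smul_eq_mul] using h0
  -- Joachimsthal relations at the three vertices
  have hg1 : ‖P₃ - P₁‖*(1 - ((P₁ 0)*(P₂ 0)/a^2 + (P₁ 1)*(P₂ 1)/b^2))
      = s₃*(1 - ((P₁ 0)*(P₃ 0)/a^2 + (P₁ 1)*(P₃ 1)/b^2)) :=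
    refl_step (a^2) (b^2) (P₁ 0) (P₁ 1) (P₂ 0) (P₂ 1) (P₃ 0) (P₃ 1) s₃ ‖P₃ - P₁‖ s₁
      hApos hBpos he1' he2' he3' hs3 hs3p hs2' (by rw [hn31]; exact hs2p) hs1 hs1p hr1'
  have hg2 : ‖P₁ - P₂‖*(1 - ((P₂ 0)*(P₃ 0)/a^2 + (P₂ 1)*(P₃ 1)/b^2))
      = s₁*(1 - ((P₂ 0)*(P₁ 0)/a^2 + (P₂ 1)*(P₁ 1)/b^2)) :=
    refl_step (a^2) (b^2) (P₂ 0) (P₂ 1) (P₃ 0) (P₃ 1) (P₁ 0) (P₁ 1) s₁ ‖P₁ - P₂‖ s₂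
      hApos hBpos he2' he3' he1' hs1 hs1p hs3' (by rw [hn12]; exact hs3p) hs2 hs2p hr2'
  have hg3 : ‖P₂ - P₃‖*(1 - ((P₃ 0)*(P₁ 0)/a^2 + (P₃ 1)*(P₁ 1)/b^2))
      = s₂*(1 - ((P₃ 0)*(P₂ 0)/a^2 + (P₃ 1)*(P₂ 1)/b^2)) :=
    refl_step (a^2) (b^2) (P₃ 0) (P₃ 1) (P₁ 0) (P₁ 1) (P₂ 0) (P₂ 1) s₂ ‖P₂ - P₃‖ s₃
      hApos hBpos he3' he1' he2' hs2 hs2p hs1' (by rw [hn23]; exact hs1p) hs3 hs3p hr3'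
  rw [hn31] at hg1
  rw [hn12] at hg2
  rw [hn23] at hg3
  -- the Mittenpunkt is the center
  obtain ⟨hWx, hWy⟩ := mitt_core (a^2) (b^2) (P₁ 0) (P₁ 1) (P₂ 0) (P₂ 1) (P₃ 0) (P₃ 1)
    s₁ s₂ s₃ hApos hBpos he1' he2' he3' hs1 hs1p hs2 hs2p hs3 hs3p hg1 hg2 hg3
  -- strict triangle inequalities
  have hσ1 : -s₁ + s₂ + s₃ ≠ 0 :=
    sigma_ne (a^2) (b^2) (P₁ 0) (P₁ 1) (P₂ 0) (P₂ 1) (P₃ 0) (P₃ 1) s₁ s₂ s₃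
      hApos hBpos he1' he2' he3' hs1 hs1p (by linear_combination hs2) hs2p hs3 hs3p
  have hσ2' : -s₂ + s₁ + s₃ ≠ 0 :=
    sigma_ne (a^2) (b^2) (P₂ 0) (P₂ 1) (P₁ 0) (P₁ 1) (P₃ 0) (P₃ 1) s₂ s₁ s₃
      hApos hBpos he2' he1' he3' (by linear_combination hs2) hs2p hs1 hs1p (by linear_combination hs3) hs3p
  have hσ3' : -s₃ + s₁ + s₂ ≠ 0 :=
    sigma_ne (a^2) (b^2) (P₃ 0) (P₃ 1) (P₁ 0) (P₁ 1) (P₂ 0) (P₂ 1) s₃ s₁ s₂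
      hApos hBpos he3' he1' he2' hs3 hs3p (by linear_combination hs1) hs1p (by linear_combination hs2) hs2p
  have hσ2 : s₁ - s₂ + s₃ ≠ 0 := fun h0 => hσ2' (by linarith)
  have hσ3 : s₁ + s₂ - s₃ ≠ 0 := fun h0 => hσ3' (by linarith)
  -- dot-product identities
  have hd1 : 2*((P₂ 0 - P₁ 0)*(P₃ 0 - P₁ 0) + (P₂ 1 - P₁ 1)*(P₃ 1 - P₁ 1))
      = s₂^2 + s₃^2 - s₁^2 := by linear_combination hs1 - hs2 - hs3
  have hd2 : 2*((P₃ 0 - P₂ 0)*(P₁ 0 - P₂ 0) + (P₃ 1 - P₂ 1)*(P₁ 1 - P₂ 1))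
      = s₁^2 + s₃^2 - s₂^2 := by linear_combination hs2 - hs1 - hs3
  have hd3 : 2*((P₁ 0 - P₃ 0)*(P₂ 0 - P₃ 0) + (P₁ 1 - P₃ 1)*(P₂ 1 - P₃ 1))
      = s₁^2 + s₂^2 - s₃^2 := by linear_combination hs3 - hs1 - hs2
  -- side lengths of the excentral triangle
  have hE10 : E₁ 0 = (-s₁ + s₂ + s₃)⁻¹ * ((-s₁) * P₁ 0 + s₂ * P₂ 0 + s₃ * P₃ 0) := by
    show ((-s₁ + s₂ + s₃)⁻¹ • ((-s₁) • P₁ + s₂ • P₂ + s₃ • P₃)) 0 = _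
    simp [PiLp.smul_apply, PiLp.add_apply, smul_eq_mul]; ring
  have hE11 : E₁ 1 = (-s₁ + s₂ + s₃)⁻¹ * ((-s₁) * P₁ 1 + s₂ * P₂ 1 + s₃ * P₃ 1) := by
    show ((-s₁ + s₂ + s₃)⁻¹ • ((-s₁) • P₁ + s₂ • P₂ + s₃ • P₃)) 1 = _
    simp [PiLp.smul_apply, PiLp.add_apply, smul_eq_mul]; ring
  have hE20 : E₂ 0 = (s₁ - s₂ + s₃)⁻¹ * (s₁ * P₁ 0 + (-s₂) * P₂ 0 + s₃ * P₃ 0) := by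
    show ((s₁ - s₂ + s₃)⁻¹ • (s₁ • P₁ + (-s₂) • P₂ + s₃ • P₃)) 0 = _
    simp [PiLp.smul_apply, PiLp.add_apply, smul_eq_mul]; ring
  have hE21 : E₂ 1 = (s₁ - s₂ + s₃)⁻¹ * (s₁ * P₁ 1 + (-s₂) * P₂ 1 + s₃ * P₃ 1) := by
    show ((s₁ - s₂ + s₃)⁻¹ • (s₁ • P₁ + (-s₂) • P₂ + s₃ • P₃)) 1 = _
    simp [PiLp.smul_apply, PiLp.add_apply, smul_eq_mul]; ring
  have hE30 : E₃ 0 = (s₁ + s₂ - s₃)⁻¹ * (s₁ * P₁ 0 + s₂ * P₂ 0 + (-s₃) * P₃ 0) := by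
    show ((s₁ + s₂ - s₃)⁻¹ • (s₁ • P₁ + s₂ • P₂ + (-s₃) • P₃)) 0 = _
    simp [PiLp.smul_apply, PiLp.add_apply, smul_eq_mul]; ring
  have hE31 : E₃ 1 = (s₁ + s₂ - s₃)⁻¹ * (s₁ * P₁ 1 + s₂ * P₂ 1 + (-s₃) * P₃ 1) := by
    show ((s₁ + s₂ - s₃)⁻¹ • (s₁ • P₁ + s₂ • P₂ + (-s₃) • P₃)) 1 = _
    simp [PiLp.smul_apply, PiLp.add_apply, smul_eq_mul]; ring
  -- squared sides of the excentral triangle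
  have ht1 : (s₁ - s₂ + s₃)*(s₁ + s₂ - s₃)*t₁^2 = 4*s₁^2*s₂*s₃ := by
    have hc0 : (s₁ - s₂ + s₃)*(s₁ + s₂ - s₃)*((E₃ - E₂) 0)
        = 2*s₁*((s₃ - s₂)*P₁ 0 + s₂*P₂ 0 - s₃*P₃ 0) := by
      rw [PiLp.sub_apply, hE30, hE20]; field_simp; ring
    have hc1 : (s₁ - s₂ + s₃)*(s₁ + s₂ - s₃)*((E₃ - E₂) 1)
        = 2*s₁*((s₃ - s₂)*P₁ 1 + s₂*P₂ 1 - s₃*P₃ 1) := by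
      rw [PiLp.sub_apply, hE31, hE21]; field_simp; ring
    have htt : t₁^2 = ((E₃ - E₂) 0)^2 + ((E₃ - E₂) 1)^2 := norm_sq_coord _
    have hstep : ((s₁ - s₂ + s₃)*(s₁ + s₂ - s₃))*((s₁ - s₂ + s₃)*(s₁ + s₂ - s₃)*t₁^2)
        = ((s₁ - s₂ + s₃)*(s₁ + s₂ - s₃))*(4*s₁^2*s₂*s₃) := by
      rw [htt]
      linear_combination ((s₁ - s₂ + s₃)*(s₁ + s₂ - s₃)*((E₃ - E₂) 0) + 2*s₁*((s₃ - s₂)*P₁ 0 + s₂*P₂ 0 - s₃*P₃ 0))*hc0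
        + ((s₁ - s₂ + s₃)*(s₁ + s₂ - s₃)*((E₃ - E₂) 1) + 2*s₁*((s₃ - s₂)*P₁ 1 + s₂*P₂ 1 - s₃*P₃ 1))*hc1
        - 4*s₁^2*s₂^2*hs3 - 4*s₁^2*s₃^2*hs2 - 4*s₁^2*s₂*s₃*hd1
    exact mul_left_cancel₀ (mul_ne_zero hσ2 hσ3) hstep
  have ht2 : (-s₁ + s₂ + s₃)*(s₁ + s₂ - s₃)*t₂^2 = 4*s₂^2*s₁*s₃ := by
    have hc0 : (-s₁ + s₂ + s₃)*(s₁ + s₂ - s₃)*((E₁ - E₃) 0)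
        = 2*s₂*((s₁ - s₃)*P₂ 0 + s₃*P₃ 0 - s₁*P₁ 0) := by
      rw [PiLp.sub_apply, hE10, hE30]; field_simp; ring
    have hc1 : (-s₁ + s₂ + s₃)*(s₁ + s₂ - s₃)*((E₁ - E₃) 1)
        = 2*s₂*((s₁ - s₃)*P₂ 1 + s₃*P₃ 1 - s₁*P₁ 1) := by
      rw [PiLp.sub_apply, hE11, hE31]; field_simp; ring
    have htt : t₂^2 = ((E₁ - E₃) 0)^2 + ((E₁ - E₃) 1)^2 := norm_sq_coord _
    have hstep : ((-s₁ + s₂ + s₃)*(s₁ + s₂ - s₃))*((-s₁ + s₂ + s₃)*(s₁ + s₂ - s₃)*t₂^2)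
        = ((-s₁ + s₂ + s₃)*(s₁ + s₂ - s₃))*(4*s₂^2*s₁*s₃) := by
      rw [htt]
      linear_combination ((-s₁ + s₂ + s₃)*(s₁ + s₂ - s₃)*((E₁ - E₃) 0) + 2*s₂*((s₁ - s₃)*P₂ 0 + s₃*P₃ 0 - s₁*P₁ 0))*hc0
        + ((-s₁ + s₂ + s₃)*(s₁ + s₂ - s₃)*((E₁ - E₃) 1) + 2*s₂*((s₁ - s₃)*P₂ 1 + s₃*P₃ 1 - s₁*P₁ 1))*hc1
        - 4*s₂^2*s₃^2*hs1 - 4*s₂^2*s₁^2*hs3 - 4*s₂^2*s₁*s₃*hd2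
    exact mul_left_cancel₀ (mul_ne_zero hσ1 hσ3) hstep
  have ht3 : (-s₁ + s₂ + s₃)*(s₁ - s₂ + s₃)*t₃^2 = 4*s₃^2*s₁*s₂ := by
    have hc0 : (-s₁ + s₂ + s₃)*(s₁ - s₂ + s₃)*((E₂ - E₁) 0)
        = 2*s₃*((s₂ - s₁)*P₃ 0 + s₁*P₁ 0 - s₂*P₂ 0) := by
      rw [PiLp.sub_apply, hE20, hE10]; field_simp; ring
    have hc1 : (-s₁ + s₂ + s₃)*(s₁ - s₂ + s₃)*((E₂ - E₁) 1)
        = 2*s₃*((s₂ - s₁)*P₃ 1 + s₁*P₁ 1 - s₂*P₂ 1) := by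
      rw [PiLp.sub_apply, hE21, hE11]; field_simp; ring
    have htt : t₃^2 = ((E₂ - E₁) 0)^2 + ((E₂ - E₁) 1)^2 := norm_sq_coord _
    have hstep : ((-s₁ + s₂ + s₃)*(s₁ - s₂ + s₃))*((-s₁ + s₂ + s₃)*(s₁ - s₂ + s₃)*t₃^2)
        = ((-s₁ + s₂ + s₃)*(s₁ - s₂ + s₃))*(4*s₃^2*s₁*s₂) := by
      rw [htt]
      linear_combination ((-s₁ + s₂ + s₃)*(s₁ - s₂ + s₃)*((E₂ - E₁) 0) + 2*s₃*((s₂ - s₁)*P₃ 0 + s₁*P₁ 0 - s₂*P₂ 0))*hc0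
        + ((-s₁ + s₂ + s₃)*(s₁ - s₂ + s₃)*((E₂ - E₁) 1) + 2*s₃*((s₂ - s₁)*P₃ 1 + s₁*P₁ 1 - s₂*P₂ 1))*hc1
        - 4*s₃^2*s₂^2*hs1 - 4*s₃^2*s₁^2*hs2 - 4*s₃^2*s₁*s₂*hd3
    exact mul_left_cancel₀ (mul_ne_zero hσ1 hσ2) hstep
  -- the weighted sum of excenters vanishes
  have key : t₁ ^ 2 • E₁ + t₂ ^ 2 • E₂ + t₃ ^ 2 • E₃ = (0 : Pt) := by
    ext i
    fin_cases i
    · show (t₁ ^ 2 • E₁ + t₂ ^ 2 • E₂ + t₃ ^ 2 • E₃) 0 = (0 : Pt) 0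
      rw [PiLp.add_apply, PiLp.add_apply, PiLp.smul_apply (x := E₁), PiLp.smul_apply (x := E₂), PiLp.smul_apply (x := E₃),
        PiLp.zero_apply, hE10, hE20, hE30, smul_eq_mul, smul_eq_mul, smul_eq_mul]
      field_simp
      linear_combination ((-s₁)*P₁ 0 + s₂*P₂ 0 + s₃*P₃ 0)*ht1
        + (s₁*P₁ 0 + (-s₂)*P₂ 0 + s₃*P₃ 0)*ht2
        + (s₁*P₁ 0 + s₂*P₂ 0 + (-s₃)*P₃ 0)*ht3
        + 4*s₁*s₂*s₃*hWx
    · show (t₁ ^ 2 • E₁ + t₂ ^ 2 • E₂ + t₃ ^ 2 • E₃) 1 = (0 : Pt) 1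
      rw [PiLp.add_apply, PiLp.add_apply, PiLp.smul_apply (x := E₁), PiLp.smul_apply (x := E₂), PiLp.smul_apply (x := E₃),
        PiLp.zero_apply, hE11, hE21, hE31, smul_eq_mul, smul_eq_mul, smul_eq_mul]
      field_simp
      linear_combination ((-s₁)*P₁ 1 + s₂*P₂ 1 + s₃*P₃ 1)*ht1
        + (s₁*P₁ 1 + (-s₂)*P₂ 1 + s₃*P₃ 1)*ht2
        + (s₁*P₁ 1 + s₂*P₂ 1 + (-s₃)*P₃ 1)*ht3
        + 4*s₁*s₂*s₃*hWy
  rw [key, smul_zero]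
end
end

section
/- For every 3-periodic billiard orbit P₁P₂P₃ in the ellipse E, the inradius-to-circumradius ratio, the Joachimsthal constant γ, and the perimeter L satisfy r/R = γ·L − 4, where γ = |⟪(P₂ − P₁)/‖P₂ − P₁‖, (x₁/a², y₁/b²)⟫| with P₁ = (x₁, y₁). -/
noncomputable section

open EuclideanGeometry Real

private lemma sq_sum_pos' {p q : ℝ} (h : ¬(p = 0 ∧ q = 0)) : 0 < p^2 + q^2 := by
  rcases not_and_or.mp h with h'|h'
  · have h1 : 0 < p^2 := by positivity
    nlinarith [sq_nonneg q]
  · have h1 : 0 < q^2 := by positivity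
    nlinarith [sq_nonneg p]

private lemma collin_aux (X1 Y1 X2 Y2 s t : ℝ) (hs : s ≠ 0) (ht : t ≠ 0)
    (hx : X2/s - X1/t = 0) (hy : Y2/s - Y1/t = 0) : X1*Y2 - Y1*X2 = 0 := by
  have hx' : X2*t = X1*s := by field_simp at hx; linarith
  have hy' : Y2*t = Y1*s := by field_simp at hy; linarith
  have h : t*(X1*Y2 - Y1*X2) = 0 := by linear_combination X1*hy' - Y1*hx'
  rcases mul_eq_zero.mp h with h'|h'
  · exact absurd h' ht
  · exact h'

private lemma span_perp (c1 c2 w0 w1 : ℝ) (hc : ¬(c1 = 0 ∧ c2 = 0))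
    (h : w0 * (-c2) + w1 * c1 = 0) : ∃ μ, w0 = μ * c1 ∧ w1 = μ * c2 := by
  have hcc : (0:ℝ) < c1^2 + c2^2 := sq_sum_pos' hc
  refine ⟨(w0*c1 + w1*c2)/(c1^2+c2^2), ?_, ?_⟩
  · rw [div_mul_eq_mul_div, eq_div_iff hcc.ne']
    linear_combination (-c2) * h
  · rw [div_mul_eq_mul_div, eq_div_iff hcc.ne']
    linear_combination c1 * h

private lemma ratio_helper (t l p : ℝ) (ht : 0 < t) (hl : 0 < l) (hp : 0 < p) :
    (2 * (t / 2) / l) / (p / (4 * (t / 2))) = 2*t^2/(l*p) := by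
  rw [div_div_div_comm, div_div_eq_mul_div, div_mul_eq_mul_div, div_div]
  rw [div_eq_div_iff (by positivity) (by positivity)]
  ring

set_option maxHeartbeats 2000000 in
private lemma key (a b x1 y1 x2 y2 x3 y3 s1 s2 s3 : ℝ)
    (ha : 0 < a) (hb : 0 < b)
    (hs1 : 0 < s1) (hs2 : 0 < s2) (hs3 : 0 < s3)
    (q1 : s1^2 = (x3-x2)^2 + (y3-y2)^2)
    (q2 : s2^2 = (x1-x3)^2 + (y1-y3)^2)
    (q3 : s3^2 = (x2-x1)^2 + (y2-y1)^2)
    (E1 : x1^2/a^2 + y1^2/b^2 = 1)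
    (E2 : x2^2/a^2 + y2^2/b^2 = 1)
    (E3 : x3^2/a^2 + y3^2/b^2 = 1)
    (ne12 : ¬(x1 = x2 ∧ y1 = y2)) (ne23 : ¬(x2 = x3 ∧ y2 = y3))
    (ne13 : ¬(x1 = x3 ∧ y1 = y3))
    (R1 : (s3⁻¹*(x2-x1) + s2⁻¹*(x3-x1)) * (-y1/b^2)
        + (s3⁻¹*(y2-y1) + s2⁻¹*(y3-y1)) * (x1/a^2) = 0)
    (R2 : (s1⁻¹*(x3-x2) + s3⁻¹*(x1-x2)) * (-y2/b^2)
        + (s1⁻¹*(y3-y2) + s3⁻¹*(y1-y2)) * (x2/a^2) = 0)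
    (R3 : (s2⁻¹*(x1-x3) + s1⁻¹*(x2-x3)) * (-y3/b^2)
        + (s2⁻¹*(y1-y3) + s1⁻¹*(y2-y3)) * (x3/a^2) = 0) :
    (2 * (|(x2-x1)*(y3-y1) - (y2-y1)*(x3-x1)| / 2) / (s1 + s2 + s3)) /
      (s1 * s2 * s3 / (4 * (|(x2-x1)*(y3-y1) - (y2-y1)*(x3-x1)| / 2))) =
    |s3⁻¹ * (x2 - x1) * (x1 / a^2) + s3⁻¹ * (y2 - y1) * (y1 / b^2)| * (s1 + s2 + s3) - 4 := by
  have ha' : a ≠ 0 := ha.ne'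
  have hb' : b ≠ 0 := hb.ne'
  have hs1' : s1 ≠ 0 := hs1.ne'
  have hs2' : s2 ≠ 0 := hs2.ne'
  have hs3' : s3 ≠ 0 := hs3.ne'
  have hL : (0:ℝ) < s1 + s2 + s3 := by linarith
  -- non-collinearity
  have hD : (x2-x1)*(y3-y1) - (y2-y1)*(x3-x1) ≠ 0 := by
    intro hD0
    have hu : ¬(x2 - x1 = 0 ∧ y2 - y1 = 0) := by
      rintro ⟨hx, hy⟩
      exact ne12 ⟨by linarith, by linarith⟩
    obtain ⟨l, hl1, hl2⟩ : ∃ l, x3 - x1 = l*(x2-x1) ∧ y3 - y1 = l*(y2-y1) := by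
      by_cases hx : x2 - x1 = 0
      · have hy : y2 - y1 ≠ 0 := fun h => hu ⟨hx, h⟩
        refine ⟨(y3-y1)/(y2-y1), ?_, by field_simp⟩
        have h5 : (y2-y1)*(x3-x1) = 0 := by linear_combination (y3-y1)*hx - hD0
        rw [hx, mul_zero]
        exact (mul_eq_zero.mp h5).resolve_left hy
      · refine ⟨(x3-x1)/(x2-x1), by field_simp, ?_⟩
        rw [div_mul_eq_mul_div, eq_div_iff hx]
        linear_combination hD0
    have F1 : b^2*x1^2 + a^2*y1^2 = a^2*b^2 := by
      have h := E1; field_simp at h; linarith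
    have F2 : b^2*x2^2 + a^2*y2^2 = a^2*b^2 := by
      have h := E2; field_simp at h; linarith
    have F3 : b^2*x3^2 + a^2*y3^2 = a^2*b^2 := by
      have h := E3; field_simp at h; linarith
    have hK : 2*(b^2*x1*(x2-x1) + a^2*y1*(y2-y1))
        = -(b^2*(x2-x1)^2 + a^2*(y2-y1)^2) := by linear_combination F2 - F1
    have hx3 : x3 = x1 + l*(x2-x1) := by linarith
    have hy3 : y3 = y1 + l*(y2-y1) := by linarith
    have h31 : b^2*(x3^2-x1^2) + a^2*(y3^2-y1^2) = 0 := by linear_combination F3 - F1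
    rw [hx3, hy3] at h31
    have hfin : l*(l-1)*(b^2*(x2-x1)^2 + a^2*(y2-y1)^2) = 0 := by
      linear_combination h31 - l*hK
    have hQ : 0 < b^2*(x2-x1)^2 + a^2*(y2-y1)^2 := by
      rcases not_and_or.mp hu with h'|h'
      · have h1 : 0 < (x2-x1)^2 := by positivity
        have h2 : 0 < b^2*(x2-x1)^2 := mul_pos (pow_pos hb 2) h1
        have h3 : 0 ≤ a^2*(y2-y1)^2 := mul_nonneg (pow_pos ha 2).le (sq_nonneg _)
        linarith
      · have h1 : 0 < (y2-y1)^2 := by positivity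
        have h2 : 0 < a^2*(y2-y1)^2 := mul_pos (pow_pos ha 2) h1
        have h3 : 0 ≤ b^2*(x2-x1)^2 := mul_nonneg (pow_pos hb 2).le (sq_nonneg _)
        linarith
    rcases mul_eq_zero.mp hfin with h'|h'
    · rcases mul_eq_zero.mp h' with h''|h''
      · exact ne13 ⟨by rw [hx3, h'']; ring, by rw [hy3, h'']; ring⟩
      · have hl : l = 1 := by linarith
        exact ne23 ⟨by rw [hx3, hl]; ring, by rw [hy3, hl]; ring⟩
    · exact absurd h' hQ.ne'
  -- normal vectors are nonzero
  have hn1 : ¬(x1/a^2 = 0 ∧ y1/b^2 = 0) := by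
    rintro ⟨h1, h2⟩
    have hx : x1 = 0 := by
      rcases div_eq_zero_iff.mp h1 with h|h
      · exact h
      · exact absurd h (pow_ne_zero 2 ha')
    have hy : y1 = 0 := by
      rcases div_eq_zero_iff.mp h2 with h|h
      · exact h
      · exact absurd h (pow_ne_zero 2 hb')
    rw [hx, hy] at E1; norm_num at E1
  have hn2 : ¬(x2/a^2 = 0 ∧ y2/b^2 = 0) := by
    rintro ⟨h1, h2⟩
    have hx : x2 = 0 := by
      rcases div_eq_zero_iff.mp h1 with h|h
      · exact h
      · exact absurd h (pow_ne_zero 2 ha')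
    have hy : y2 = 0 := by
      rcases div_eq_zero_iff.mp h2 with h|h
      · exact h
      · exact absurd h (pow_ne_zero 2 hb')
    rw [hx, hy] at E2; norm_num at E2
  have hn3 : ¬(x3/a^2 = 0 ∧ y3/b^2 = 0) := by
    rintro ⟨h1, h2⟩
    have hx : x3 = 0 := by
      rcases div_eq_zero_iff.mp h1 with h|h
      · exact h
      · exact absurd h (pow_ne_zero 2 ha')
    have hy : y3 = 0 := by
      rcases div_eq_zero_iff.mp h2 with h|h
      · exact h
      · exact absurd h (pow_ne_zero 2 hb')
    rw [hx, hy] at E3; norm_num at E3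
  -- unit tangent chords
  have U1 : ((x2-x1)/s3)^2 + ((y2-y1)/s3)^2 = 1 := by
    field_simp
    linarith [q3]
  have U2 : ((x3-x2)/s1)^2 + ((y3-y2)/s1)^2 = 1 := by
    field_simp
    linarith [q1]
  have U3 : ((x1-x3)/s2)^2 + ((y1-y3)/s2)^2 = 1 := by
    field_simp
    linarith [q2]
  -- reflection: existence of μ's
  obtain ⟨μ1, hμ1x, hμ1y⟩ :=
    span_perp (x1/a^2) (y1/b^2) ((x2-x1)/s3 - (x1-x3)/s2) ((y2-y1)/s3 - (y1-y3)/s2)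
      hn1 (by linear_combination R1)
  obtain ⟨μ2, hμ2x, hμ2y⟩ :=
    span_perp (x2/a^2) (y2/b^2) ((x3-x2)/s1 - (x2-x1)/s3) ((y3-y2)/s1 - (y2-y1)/s3)
      hn2 (by linear_combination R2)
  obtain ⟨μ3, hμ3x, hμ3y⟩ :=
    span_perp (x3/a^2) (y3/b^2) ((x1-x3)/s2 - (x3-x2)/s1) ((y1-y3)/s2 - (y3-y2)/s1)
      hn3 (by linear_combination R3)
  -- side chords are not parallel
  have hvne1 : ¬((x2-x1)/s3 - (x1-x3)/s2 = 0 ∧ (y2-y1)/s3 - (y1-y3)/s2 = 0) := by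
    rintro ⟨hx, hy⟩
    exact hD (by linear_combination collin_aux (x1-x3) (y1-y3) (x2-x1) (y2-y1) s3 s2 hs3' hs2' hx hy)
  have hvne2 : ¬((x3-x2)/s1 - (x2-x1)/s3 = 0 ∧ (y3-y2)/s1 - (y2-y1)/s3 = 0) := by
    rintro ⟨hx, hy⟩
    exact hD (by linear_combination collin_aux (x2-x1) (y2-y1) (x3-x2) (y3-y2) s1 s3 hs1' hs3' hx hy)
  have hvne3 : ¬((x1-x3)/s2 - (x3-x2)/s1 = 0 ∧ (y1-y3)/s2 - (y3-y2)/s1 = 0) := by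
    rintro ⟨hx, hy⟩
    exact hD (by linear_combination collin_aux (x3-x2) (y3-y2) (x1-x3) (y1-y3) s2 s1 hs2' hs1' hx hy)
  have hμ1 : μ1 ≠ 0 := by
    intro h0
    exact hvne1 ⟨by rw [hμ1x, h0, zero_mul], by rw [hμ1y, h0, zero_mul]⟩
  have hμ2 : μ2 ≠ 0 := by
    intro h0
    exact hvne2 ⟨by rw [hμ2x, h0, zero_mul], by rw [hμ2y, h0, zero_mul]⟩
  have hμ3 : μ3 ≠ 0 := by
    intro h0
    exact hvne3 ⟨by rw [hμ3x, h0, zero_mul], by rw [hμ3y, h0, zero_mul]⟩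
  -- Joachimsthal constant
  obtain ⟨g, hgdef⟩ : ∃ g, g = (x2-x1)/s3*(x1/a^2) + (y2-y1)/s3*(y1/b^2) := ⟨_, rfl⟩
  -- chord relations
  have C12 : (x2-x1)*(x2/a^2) + (y2-y1)*(y2/b^2)
      = -((x2-x1)*(x1/a^2) + (y2-y1)*(y1/b^2)) := by linear_combination E2 - E1
  have C31 : (x1-x3)*(x1/a^2) + (y1-y3)*(y1/b^2)
      = -((x1-x3)*(x3/a^2) + (y1-y3)*(y3/b^2)) := by linear_combination E1 - E3
  have hn2t1 : ((x2-x1)/s3)*(x2/a^2) + ((y2-y1)/s3)*(y2/b^2) = -g := by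
    linear_combination (1/s3)*C12 + hgdef
  -- tangential components vanish (elastic reflection preserves speed)
  have step1 : μ1 * ((x1/a^2)*((x2-x1)/s3 + (x1-x3)/s2) + (y1/b^2)*((y2-y1)/s3 + (y1-y3)/s2)) = 0 := by
    linear_combination U1 - U3 - ((x2-x1)/s3 + (x1-x3)/s2)*hμ1x - ((y2-y1)/s3 + (y1-y3)/s2)*hμ1y
  have step2 : μ2 * ((x2/a^2)*((x3-x2)/s1 + (x2-x1)/s3) + (y2/b^2)*((y3-y2)/s1 + (y2-y1)/s3)) = 0 := by
    linear_combination U2 - U1 - ((x3-x2)/s1 + (x2-x1)/s3)*hμ2x - ((y3-y2)/s1 + (y2-y1)/s3)*hμ2y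
  have step3 : μ3 * ((x3/a^2)*((x1-x3)/s2 + (x3-x2)/s1) + (y3/b^2)*((y1-y3)/s2 + (y3-y2)/s1)) = 0 := by
    linear_combination U3 - U2 - ((x1-x3)/s2 + (x3-x2)/s1)*hμ3x - ((y1-y3)/s2 + (y3-y2)/s1)*hμ3y
  have K1 : (x1/a^2)*((x2-x1)/s3 + (x1-x3)/s2) + (y1/b^2)*((y2-y1)/s3 + (y1-y3)/s2) = 0 :=
    (mul_eq_zero.mp step1).resolve_left hμ1
  have K2 : (x2/a^2)*((x3-x2)/s1 + (x2-x1)/s3) + (y2/b^2)*((y3-y2)/s1 + (y2-y1)/s3) = 0 :=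
    (mul_eq_zero.mp step2).resolve_left hμ2
  have K3 : (x3/a^2)*((x1-x3)/s2 + (x3-x2)/s1) + (y3/b^2)*((y1-y3)/s2 + (y3-y2)/s1) = 0 :=
    (mul_eq_zero.mp step3).resolve_left hμ3
  have hn1t3 : ((x1-x3)/s2)*(x1/a^2) + ((y1-y3)/s2)*(y1/b^2) = -g := by
    linear_combination K1 + hgdef
  have hg3 : ((x1-x3)/s2)*(x3/a^2) + ((y1-y3)/s2)*(y3/b^2) = g := by
    linear_combination (1/s2)*C31 - hn1t3
  have hg1 : ((x3-x2)/s1)*(x2/a^2) + ((y3-y2)/s1)*(y2/b^2) = g := by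
    linear_combination K2 - hn2t1
  have hn3t2 : ((x3-x2)/s1)*(x3/a^2) + ((y3-y2)/s1)*(y3/b^2) = -g := by
    linear_combination K3 - hg3
  -- half-angle identities
  have e1c : 1 + ((x2-x1)*(x3-x1) + (y2-y1)*(y3-y1))/s2/s3
      = (((x2-x1)/s3 - (x1-x3)/s2)^2 + ((y2-y1)/s3 - (y1-y3)/s2)^2)/2 := by
    linear_combination (-(1:ℝ)/2)*U1 - (1/2)*U3
  have e2c : 1 + ((x1-x2)*(x3-x2) + (y1-y2)*(y3-y2))/s1/s3
      = (((x3-x2)/s1 - (x2-x1)/s3)^2 + ((y3-y2)/s1 - (y2-y1)/s3)^2)/2 := by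
    linear_combination (-(1:ℝ)/2)*U1 - (1/2)*U2
  have e3c : 1 + ((x1-x3)*(x2-x3) + (y1-y3)*(y2-y3))/s1/s2
      = (((x1-x3)/s2 - (x3-x2)/s1)^2 + ((y1-y3)/s2 - (y3-y2)/s1)^2)/2 := by
    linear_combination (-(1:ℝ)/2)*U2 - (1/2)*U3
  have hpos1 : 0 < 1 + ((x2-x1)*(x3-x1) + (y2-y1)*(y3-y1))/s2/s3 := by
    rw [e1c]; linarith [sq_sum_pos' hvne1]
  have hpos2 : 0 < 1 + ((x1-x2)*(x3-x2) + (y1-y2)*(y3-y2))/s1/s3 := by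
    rw [e2c]; linarith [sq_sum_pos' hvne2]
  have hpos3 : 0 < 1 + ((x1-x3)*(x2-x3) + (y1-y3)*(y2-y3))/s1/s2 := by
    rw [e3c]; linarith [sq_sum_pos' hvne3]
  -- 1 + cos θᵢ = μᵢ g
  have V1 : 1 + ((x2-x1)*(x3-x1) + (y2-y1)*(y3-y1))/s2/s3 = μ1 * g := by
    linear_combination e1c + (1/2)*((x2-x1)/s3 - (x1-x3)/s2)*hμ1x
      + (1/2)*((y2-y1)/s3 - (y1-y3)/s2)*hμ1y - (μ1/2)*hgdef - (μ1/2)*hn1t3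
  have V2 : 1 + ((x1-x2)*(x3-x2) + (y1-y2)*(y3-y2))/s1/s3 = μ2 * g := by
    linear_combination e2c + (1/2)*((x3-x2)/s1 - (x2-x1)/s3)*hμ2x
      + (1/2)*((y3-y2)/s1 - (y2-y1)/s3)*hμ2y + (μ2/2)*hg1 - (μ2/2)*hn2t1
  have V3 : 1 + ((x1-x3)*(x2-x3) + (y1-y3)*(y2-y3))/s1/s2 = μ3 * g := by
    linear_combination e3c + (1/2)*((x1-x3)/s2 - (x3-x2)/s1)*hμ3x
      + (1/2)*((y1-y3)/s2 - (y3-y2)/s1)*hμ3y + (μ3/2)*hg3 - (μ3/2)*hn3t2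
  -- μ₁ + μ₂ + μ₃ = -L
  have M1 : μ1 = ((x2-x1)/s3 - (x1-x3)/s2)*x1 + ((y2-y1)/s3 - (y1-y3)/s2)*y1 := by
    linear_combination -x1*hμ1x - y1*hμ1y - μ1*E1
  have M2 : μ2 = ((x3-x2)/s1 - (x2-x1)/s3)*x2 + ((y3-y2)/s1 - (y2-y1)/s3)*y2 := by
    linear_combination -x2*hμ2x - y2*hμ2y - μ2*E2
  have M3 : μ3 = ((x1-x3)/s2 - (x3-x2)/s1)*x3 + ((y1-y3)/s2 - (y3-y2)/s1)*y3 := by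
    linear_combination -x3*hμ3x - y3*hμ3y - μ3*E3
  have T1 : ((x3-x2)/s1)*(x3-x2) + ((y3-y2)/s1)*(y3-y2) = s1 := by
    field_simp
    linarith [q1]
  have T2 : ((x1-x3)/s2)*(x1-x3) + ((y1-y3)/s2)*(y1-y3) = s2 := by
    field_simp
    linarith [q2]
  have T3 : ((x2-x1)/s3)*(x2-x1) + ((y2-y1)/s3)*(y2-y1) = s3 := by
    field_simp
    linarith [q3]
  have hsum : μ1 + μ2 + μ3 = -(s1+s2+s3) := by
    linear_combination M1 + M2 + M3 - T3 - T1 - T2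
  -- sum of the three identities
  have hsumc : (1 + ((x2-x1)*(x3-x1) + (y2-y1)*(y3-y1))/s2/s3)
      + (1 + ((x1-x2)*(x3-x2) + (y1-y2)*(y3-y2))/s1/s3)
      + (1 + ((x1-x3)*(x2-x3) + (y1-y3)*(y2-y3))/s1/s2) = -(g*(s1+s2+s3)) := by
    linear_combination V1 + V2 + V3 + g*hsum
  have hS : 0 < -(g*(s1+s2+s3)) := hsumc ▸ add_pos (add_pos hpos1 hpos2) hpos3
  have hgneg : g < 0 := by
    by_contra hg0
    push_neg at hg0
    exact absurd (neg_pos.mp hS) (not_lt.mpr (mul_nonneg hg0 hL.le))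
  -- cleared versions
  have i1 : s1*s1⁻¹ = 1 := mul_inv_cancel₀ hs1'
  have i2 : s2*s2⁻¹ = 1 := mul_inv_cancel₀ hs2'
  have i3 : s3*s3⁻¹ = 1 := mul_inv_cancel₀ hs3'
  have V1c : s2*s3 + ((x2-x1)*(x3-x1) + (y2-y1)*(y3-y1)) = μ1*g*(s2*s3) := by
    linear_combination (s2*s3)*V1 - ((x2-x1)*(x3-x1) + (y2-y1)*(y3-y1))*(s2*s2⁻¹)*i3
      - ((x2-x1)*(x3-x1) + (y2-y1)*(y3-y1))*i2
  have V2c : s1*s3 + ((x1-x2)*(x3-x2) + (y1-y2)*(y3-y2)) = μ2*g*(s1*s3) := by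
    linear_combination (s1*s3)*V2 - ((x1-x2)*(x3-x2) + (y1-y2)*(y3-y2))*(s1*s1⁻¹)*i3
      - ((x1-x2)*(x3-x2) + (y1-y2)*(y3-y2))*i1
  have V3c : s1*s2 + ((x1-x3)*(x2-x3) + (y1-y3)*(y2-y3)) = μ3*g*(s1*s2) := by
    linear_combination (s1*s2)*V3 - ((x1-x3)*(x2-x3) + (y1-y3)*(y2-y3))*(s1*s1⁻¹)*i2
      - ((x1-x3)*(x2-x3) + (y1-y3)*(y2-y3))*i1
  have hsumcc : s1*((x2-x1)*(x3-x1) + (y2-y1)*(y3-y1))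
      + s2*((x1-x2)*(x3-x2) + (y1-y2)*(y3-y2))
      + s3*((x1-x3)*(x2-x3) + (y1-y3)*(y2-y3))
      + 3*(s1*s2*s3) + g*(s1+s2+s3)*(s1*s2*s3) = 0 := by
    linear_combination s1*V1c + s2*V2c + s3*V3c + g*(s1*s2*s3)*hsum
  -- Heron-type metric identity
  have FMI : 2*((x2-x1)*(y3-y1) - (y2-y1)*(x3-x1))^2
      = (s1*((x2-x1)*(x3-x1) + (y2-y1)*(y3-y1))
        + s2*((x1-x2)*(x3-x2) + (y1-y2)*(y3-y2))
        + s3*((x1-x3)*(x2-x3) + (y1-y3)*(y2-y3))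
        - s1*s2*s3)*(s1+s2+s3) := by
    linear_combination (s2*s3 - ((x2-x1)*(x3-x1) + (y2-y1)*(y3-y1)))*q1
      + (s1*s3 - ((x1-x2)*(x3-x2) + (y1-y2)*(y3-y2)))*q2
      + (s1*s2 - ((x1-x3)*(x2-x3) + (y1-y3)*(y2-y3)))*q3
  -- final assembly
  have hApos : 0 < |(x2-x1)*(y3-y1) - (y2-y1)*(x3-x1)| := abs_pos.mpr hD
  have habs : |s3⁻¹ * (x2 - x1) * (x1 / a^2) + s3⁻¹ * (y2 - y1) * (y1 / b^2)| = -g := by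
    rw [show s3⁻¹ * (x2 - x1) * (x1 / a^2) + s3⁻¹ * (y2 - y1) * (y1 / b^2) = g by
      linear_combination -hgdef]
    exact abs_of_neg hgneg
  rw [habs]
  rw [ratio_helper _ _ _ hApos hL (by positivity : (0:ℝ) < s1*s2*s3),
    div_eq_iff (by positivity : ((s1+s2+s3)*(s1*s2*s3)) ≠ 0)]
  have ht2 : |(x2-x1)*(y3-y1) - (y2-y1)*(x3-x1)|^2
      = ((x2-x1)*(y3-y1) - (y2-y1)*(x3-x1))^2 := sq_abs _
  linear_combination FMI + (s1+s2+s3)*hsumcc + 2*ht2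

set_option maxHeartbeats 2000000 in
/-- Relation between the inradius-to-circumradius ratio, Joachimsthal's constant
and the perimeter: r/R = γL − 4. -/
theorem rovR_eq_gammaL_sub_four (a b : ℝ) (hb : 0 < b) (hab : b < a)
    (P₁ P₂ P₃ : Pt) (h : IsOrbit a b P₁ P₂ P₃) :
    let s₁ := ‖P₃ - P₂‖
    let s₂ := ‖P₁ - P₃‖
    let s₃ := ‖P₂ - P₁‖
    let L := s₁ + s₂ + s₃
    let A := |((P₂ - P₁) 0) * ((P₃ - P₁) 1) - ((P₂ - P₁) 1) * ((P₃ - P₁) 0)| / 2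
    let r := 2 * A / L
    let R := s₁ * s₂ * s₃ / (4 * A)
    let γ := |((‖P₂ - P₁‖⁻¹ • (P₂ - P₁)) 0) * (P₁ 0 / a ^ 2) +
              ((‖P₂ - P₁‖⁻¹ • (P₂ - P₁)) 1) * (P₁ 1 / b ^ 2)|
    r / R = γ * L - 4 := by
  obtain ⟨h12, h23, h13, e1, e2, e3, r1, r2, r3⟩ := h
  intro s₁ s₂ s₃ L A r R γ
  have ha : (0:ℝ) < a := hb.trans hab
  have hnorm : ∀ v : Pt, ‖v‖^2 = (v 0)^2 + (v 1)^2 := by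
    intro v
    rw [EuclideanSpace.norm_eq, Real.sq_sqrt (by positivity)]
    simp [Fin.sum_univ_two, sq_abs]
  have hs1p : 0 < s₁ := norm_pos_iff.mpr (sub_ne_zero.mpr (Ne.symm h23))
  have hs2p : 0 < s₂ := norm_pos_iff.mpr (sub_ne_zero.mpr h13)
  have hs3p : 0 < s₃ := norm_pos_iff.mpr (sub_ne_zero.mpr (Ne.symm h12))
  have q1 : s₁^2 = (P₃ 0 - P₂ 0)^2 + (P₃ 1 - P₂ 1)^2 := hnorm (P₃ - P₂)
  have q2 : s₂^2 = (P₁ 0 - P₃ 0)^2 + (P₁ 1 - P₃ 1)^2 := hnorm (P₁ - P₃)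
  have q3 : s₃^2 = (P₂ 0 - P₁ 0)^2 + (P₂ 1 - P₁ 1)^2 := hnorm (P₂ - P₁)
  have ne12 : ¬(P₁ 0 = P₂ 0 ∧ P₁ 1 = P₂ 1) := by
    rintro ⟨hx, hy⟩
    exact h12 (by ext i; fin_cases i <;> assumption)
  have ne23 : ¬(P₂ 0 = P₃ 0 ∧ P₂ 1 = P₃ 1) := by
    rintro ⟨hx, hy⟩
    exact h23 (by ext i; fin_cases i <;> assumption)
  have ne13 : ¬(P₁ 0 = P₃ 0 ∧ P₁ 1 = P₃ 1) := by
    rintro ⟨hx, hy⟩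
    exact h13 (by ext i; fin_cases i <;> assumption)
  have hn31 : ‖P₃ - P₁‖ = s₂ := norm_sub_rev _ _
  have hn13 : ‖P₁ - P₂‖ = s₃ := norm_sub_rev _ _
  have hn23 : ‖P₂ - P₃‖ = s₁ := norm_sub_rev _ _
  have R1' : (s₃⁻¹*(P₂ 0 - P₁ 0) + s₂⁻¹*(P₃ 0 - P₁ 0)) * (-(P₁ 1)/b^2)
      + (s₃⁻¹*(P₂ 1 - P₁ 1) + s₂⁻¹*(P₃ 1 - P₁ 1)) * ((P₁ 0)/a^2) = 0 := by
    have h := r1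
    simp only [reflects] at h
    rw [hn31] at h
    exact h
  have R2' : (s₁⁻¹*(P₃ 0 - P₂ 0) + s₃⁻¹*(P₁ 0 - P₂ 0)) * (-(P₂ 1)/b^2)
      + (s₁⁻¹*(P₃ 1 - P₂ 1) + s₃⁻¹*(P₁ 1 - P₂ 1)) * ((P₂ 0)/a^2) = 0 := by
    have h := r2
    simp only [reflects] at h
    rw [hn13] at h
    exact h
  have R3' : (s₂⁻¹*(P₁ 0 - P₃ 0) + s₁⁻¹*(P₂ 0 - P₃ 0)) * (-(P₃ 1)/b^2)
      + (s₂⁻¹*(P₁ 1 - P₃ 1) + s₁⁻¹*(P₂ 1 - P₃ 1)) * ((P₃ 0)/a^2) = 0 := by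
    have h := r3
    simp only [reflects] at h
    rw [hn23] at h
    exact h
  exact key a b (P₁ 0) (P₁ 1) (P₂ 0) (P₂ 1) (P₃ 0) (P₃ 1) s₁ s₂ s₃
    ha hb hs1p hs2p hs3p q1 q2 q3 e1 e2 e3 ne12 ne23 ne13 R1' R2' R3'
end
end

section
/- If a 3-periodic billiard orbit P₁P₂P₃ in the ellipse E has a vertex at the horizontal vertex of the billiard, P₁ = (a, 0), then its inradius and circumradius are r = b²(δ − b²)/(c²·a) and R = (a² + δ)/(2a). -/
noncomputable section

open EuclideanGeometry Real

lemma norm_pt (X Y : Pt) : ‖X - Y‖ = Real.sqrt ((X 0 - Y 0)^2 + (X 1 - Y 1)^2) := by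
  rw [EuclideanSpace.norm_eq, Fin.sum_univ_two, Real.norm_eq_abs, Real.norm_eq_abs, sq_abs, sq_abs]
  rfl

lemma reflects_coord (a b : ℝ) (P Q R : Pt) (h : reflects a b P Q R) :
    (‖Q - P‖⁻¹ * (Q 0 - P 0) + ‖R - P‖⁻¹ * (R 0 - P 0)) * (-(P 1) / b ^ 2) +
    (‖Q - P‖⁻¹ * (Q 1 - P 1) + ‖R - P‖⁻¹ * (R 1 - P 1)) * ((P 0) / a ^ 2) = 0 := h


lemma aux_quad (a b p q d2 : ℝ) (ha : 0 < a) (hb : 0 < b) (hplt : p < a)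
    (hq2 : q ^ 2 * a ^ 2 = b ^ 2 * (a ^ 2 - p ^ 2))
    (d2sq : d2 ^ 2 = (p - a) ^ 2 + q ^ 2)
    (hR2 : p * b ^ 2 * d2 = -(q * (a ^ 3 - (a ^ 2 - b ^ 2) * p))) :
    (a ^ 2 - b ^ 2) * p ^ 2 - 2 * a * b ^ 2 * p - a ^ 4 = 0 := by
  have hG : (p * b ^ 2 * d2) ^ 2 = (q * (a ^ 3 - (a ^ 2 - b ^ 2) * p)) ^ 2 := by
    rw [hR2]; ring
  have h7 : a ^ 2 * b ^ 2 * (a - p) ^ 2 *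
      ((a ^ 2 - b ^ 2) * p ^ 2 - 2 * a * b ^ 2 * p - a ^ 4) = 0 := by
    linear_combination a ^ 2 * hG - a ^ 2 * p ^ 2 * b ^ 4 * d2sq -
      (p ^ 2 * b ^ 4 - (a ^ 3 - (a ^ 2 - b ^ 2) * p) ^ 2) * hq2
  have h8 : (0:ℝ) < a ^ 2 * b ^ 2 * (a - p) ^ 2 :=
    mul_pos (mul_pos (pow_pos ha 2) (pow_pos hb 2)) (pow_pos (by linarith : (0:ℝ) < a - p) 2)
  exact (mul_eq_zero.mp h7).resolve_left h8.ne'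

lemma aux_pneg (a b p q d2 : ℝ) (ha : 0 < a) (hb : 0 < b) (hab : b < a)
    (hc2 : 0 < a ^ 2 - b ^ 2) (hplt : p < a) (hqpos : 0 < q) (d2pos : 0 < d2)
    (hR2 : p * b ^ 2 * d2 = -(q * (a ^ 3 - (a ^ 2 - b ^ 2) * p))) : p < 0 := by
  have h9 : 0 < a ^ 3 - (a ^ 2 - b ^ 2) * p := by
    nlinarith [mul_lt_mul_of_pos_left hplt hc2, mul_pos ha (pow_pos hb 2)]
  by_contra hp0
  push_neg at hp0
  have h10 : 0 ≤ p * (b ^ 2 * d2) := mul_nonneg hp0 (mul_pos (pow_pos hb 2) d2pos).le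
  linarith [mul_pos hqpos h9, hR2, h10]

lemma aux_del (a b p : ℝ) (ha : 0 < a) (hb : 0 < b) (hc2 : 0 < a ^ 2 - b ^ 2) (hpneg : p < 0)
    (hQuad : (a ^ 2 - b ^ 2) * p ^ 2 - 2 * a * b ^ 2 * p - a ^ 4 = 0) :
    Real.sqrt (a ^ 4 - a ^ 2 * b ^ 2 + b ^ 4) = b ^ 2 - (a ^ 2 - b ^ 2) * p / a := by
  have ha' : a ≠ 0 := ha.ne'
  rw [show a ^ 4 - a ^ 2 * b ^ 2 + b ^ 4 = (b ^ 2 - (a ^ 2 - b ^ 2) * p / a) ^ 2 by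
    field_simp; linear_combination (b ^ 2 - a ^ 2) * hQuad]
  refine Real.sqrt_sq ?_
  rw [sub_nonneg, div_le_iff₀ ha]
  nlinarith [mul_pos hc2 (neg_pos.mpr hpneg), mul_pos (pow_pos hb 2) ha]

lemma aux_f1 (a b p q d2 : ℝ) (ha : 0 < a) (hb : 0 < b) (hc2 : 0 < a ^ 2 - b ^ 2)
    (hplt : p < a) (hqpos : 0 < q) (d2pos : 0 < d2)
    (hR2 : p * b ^ 2 * d2 = -(q * (a ^ 3 - (a ^ 2 - b ^ 2) * p))) :
    2 * (2 * q * (a - p) / 2) / (2 * q + d2 + d2) =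
      b ^ 2 * (b ^ 2 - (a ^ 2 - b ^ 2) * p / a - b ^ 2) / ((a ^ 2 - b ^ 2) * a) := by
  have hden1 : (0:ℝ) < 2 * q + d2 + d2 := by linarith
  rw [div_eq_div_iff hden1.ne' (mul_pos hc2 ha).ne']
  field_simp
  linear_combination (2 * (a ^ 2 - b ^ 2)) * hR2

lemma aux_f2 (a b p q d2 : ℝ) (ha : 0 < a) (hb : 0 < b) (hc2 : 0 < a ^ 2 - b ^ 2)
    (hplt : p < a) (hqpos : 0 < q) (d2pos : 0 < d2)
    (hq2 : q ^ 2 * a ^ 2 = b ^ 2 * (a ^ 2 - p ^ 2))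
    (d2sq : d2 ^ 2 = (p - a) ^ 2 + q ^ 2) :
    2 * q * d2 * d2 / (4 * (2 * q * (a - p) / 2)) =
      (a ^ 2 + (b ^ 2 - (a ^ 2 - b ^ 2) * p / a)) / (2 * a) := by
  have hamp : (0:ℝ) < a - p := by linarith
  rw [div_eq_div_iff (by positivity : (0:ℝ) < 4 * (2 * q * (a - p) / 2)).ne' (by positivity : (0:ℝ) < 2 * a).ne']
  field_simp
  linear_combination 4 * a ^ 2 * d2sq + 4 * hq2

set_option maxHeartbeats 4000000 in
lemma key_s15 (a b : ℝ) (hb : 0 < b) (hab : b < a) (P₁ P₂ P₃ : Pt)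
    (h : IsOrbit a b P₁ P₂ P₃) (hx : P₁ 0 = a) (hy : P₁ 1 = 0) (hqpos : 0 < P₂ 1) :
    2 * (|((P₂ - P₁) 0) * ((P₃ - P₁) 1) - ((P₂ - P₁) 1) * ((P₃ - P₁) 0)| / 2) /
      (‖P₃ - P₂‖ + ‖P₁ - P₃‖ + ‖P₂ - P₁‖) =
      b ^ 2 * (Real.sqrt (a ^ 4 - a ^ 2 * b ^ 2 + b ^ 4) - b ^ 2) / ((a ^ 2 - b ^ 2) * a) ∧
    ‖P₃ - P₂‖ * ‖P₁ - P₃‖ * ‖P₂ - P₁‖ /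
      (4 * (|((P₂ - P₁) 0) * ((P₃ - P₁) 1) - ((P₂ - P₁) 1) * ((P₃ - P₁) 0)| / 2)) =
      (a ^ 2 + Real.sqrt (a ^ 4 - a ^ 2 * b ^ 2 + b ^ 4)) / (2 * a) := by
  obtain ⟨h12, h23, h13, e1, e2, e3, r1, r2, r3⟩ := h
  have ha : 0 < a := hb.trans hab
  have ha' : a ≠ 0 := ha.ne'
  have hb' : b ≠ 0 := hb.ne'
  have hc2 : 0 < a^2 - b^2 := by nlinarith
  set p := P₂ 0 with hpd
  set q := P₂ 1 with hqd
  set u := P₃ 0 with hud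
  set v := P₃ 1 with hvd
  unfold onEllipse at e2 e3
  rw [← hpd, ← hqd] at e2
  rw [← hud, ← hvd] at e3
  have hq2 : q ^ 2 * a ^ 2 = b ^ 2 * (a ^ 2 - p ^ 2) := by
    field_simp at e2; linarith
  have hv2 : v ^ 2 * a ^ 2 = b ^ 2 * (a ^ 2 - u ^ 2) := by
    field_simp at e3; linarith
  have d2pos : 0 < ‖P₂ - P₁‖ := norm_sub_pos_iff.mpr h12.symm
  have d3pos : 0 < ‖P₃ - P₁‖ := norm_sub_pos_iff.mpr h13.symm
  set d2 := ‖P₂ - P₁‖ with hd2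
  set d3 := ‖P₃ - P₁‖ with hd3
  have d2sq : d2 ^ 2 = (p - a) ^ 2 + q ^ 2 := by
    rw [hd2, norm_pt, Real.sq_sqrt (by positivity), hx, hy]; ring
  have d3sq : d3 ^ 2 = (u - a) ^ 2 + v ^ 2 := by
    rw [hd3, norm_pt, Real.sq_sqrt (by positivity), hx, hy]; ring
  -- reflection at P₁ in coordinates
  have R1 := reflects_coord a b P₁ P₂ P₃ r1
  rw [hx, hy, ← hpd, ← hqd, ← hud, ← hvd, ← hd2, ← hd3] at R1
  have hR1 : q * d3 + v * d2 = 0 := by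
    field_simp at R1
    exact (mul_eq_zero.mp (by linear_combination R1 : b ^ 2 * (q * d3 + v * d2) = 0)).resolve_left (by positivity)
  -- signs and strict bounds
  have hq2a : 0 < q ^ 2 * a ^ 2 := by positivity
  have hap2 : 0 < a ^ 2 - p ^ 2 := by nlinarith [hq2, hq2a, pow_pos hb 2]
  have hplt : p < a := by nlinarith [hap2]
  have hpgt : -a < p := by nlinarith [hap2]
  have hvneg : v < 0 := by nlinarith [mul_pos hqpos d3pos, d2pos, hR1]
  have hv2a : 0 < v ^ 2 * a ^ 2 := by nlinarith [mul_pos_of_neg_of_neg hvneg hvneg, pow_pos ha 2]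
  have hau2 : 0 < a ^ 2 - u ^ 2 := by nlinarith [hv2, hv2a, pow_pos hb 2]
  have hult : u < a := by nlinarith [hau2]
  -- equal squares of x-components, with equal (negative) signs
  have hsq : q ^ 2 * (u - a) ^ 2 = v ^ 2 * (p - a) ^ 2 := by
    have h1 : q * d3 = -(v * d2) := by linarith
    have h2 : (q * d3) ^ 2 = (v * d2) ^ 2 := by rw [h1]; ring
    linear_combination h2 - q ^ 2 * d3sq + v ^ 2 * d2sq
  have hstar : (p - a) * d3 = (u - a) * d2 := by
    have h1 : ((p - a) * d3 - (u - a) * d2) * ((p - a) * d3 + (u - a) * d2) = 0 := by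
      linear_combination (p - a) ^ 2 * d3sq - (u - a) ^ 2 * d2sq - hsq
    rcases mul_eq_zero.mp h1 with h | h
    · linarith
    · exfalso
      nlinarith [mul_pos (sub_pos.mpr hplt) d3pos, mul_pos (sub_pos.mpr hult) d2pos]
  have hcross : q * (u - a) + v * (p - a) = 0 := by
    have h3 : (q * (u - a) + v * (p - a)) * d2 = 0 := by
      linear_combination (-q) * hstar + (p - a) * hR1
    exact (mul_eq_zero.mp h3).resolve_right d2pos.ne'
  have hK : b ^ 2 * (p - a) ^ 2 + a ^ 2 * q ^ 2 = 2 * a * b ^ 2 * (a - p) := by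
    linear_combination hq2
  have hVQ : v = -q := by
    have h4 : 2 * a * b ^ 2 * (a - p) * (v * (v + q)) = 0 := by
      linear_combination q ^ 2 * hv2 - b ^ 2 * (u * q + a * q - v * (p - a)) * hcross - v ^ 2 * hK
    have hpos : (0:ℝ) < 2 * a * b ^ 2 * (a - p) :=
      mul_pos (by positivity) (by linarith : (0:ℝ) < a - p)
    have h5 : v * (v + q) = 0 := (mul_eq_zero.mp h4).resolve_left hpos.ne'
    rcases mul_eq_zero.mp h5 with h | h
    · exact absurd h hvneg.ne
    · linarith
  have hU : u = p := by
    have h6 : q * (u - p) = 0 := by linear_combination hcross - (p - a) * hVQ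
    exact sub_eq_zero.mp ((mul_eq_zero.mp h6).resolve_left hqpos.ne')
  -- third side
  set s := ‖P₃ - P₂‖ with hsd
  have hs : s = 2 * q := by
    rw [hsd, norm_pt, ← hud, ← hvd, ← hpd, ← hqd,
      show (u - p) ^ 2 + (v - q) ^ 2 = (2 * q) ^ 2 by rw [hU, hVQ]; ring]
    exact Real.sqrt_sq (by linarith)
  set d13 := ‖P₁ - P₃‖ with hd13d
  have hd13 : d13 = d2 := by
    rw [hd13d, hd2, norm_pt, norm_pt, hx, hy]
    congr 1
    rw [← hud, ← hvd, ← hpd, ← hqd, hU, hVQ]; ring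
  have h12n : ‖P₁ - P₂‖ = d2 := by rw [hd2, norm_sub_rev]
  -- reflection at P₂ in coordinates
  have R2 := reflects_coord a b P₂ P₃ P₁ r2
  rw [← hsd, h12n, hx, hy, ← hpd, ← hqd, ← hud, ← hvd, hs, hU, hVQ] at R2
  have hR2 : p * b ^ 2 * d2 = -(q * (a ^ 3 - (a ^ 2 - b ^ 2) * p)) := by
    field_simp at R2
    have h11 : (-2 * q * d2) * (p * b ^ 2 * d2 + q * (a ^ 3 - (a ^ 2 - b ^ 2) * p)) = 0 := by
      linear_combination q * d2 * R2
    have h12' : (-2 * q * d2) ≠ 0 := by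
      have : 0 < 2 * q * d2 := by positivity
      linarith
    have h13' := (mul_eq_zero.mp h11).resolve_left h12'
    linarith
  -- components of the determinant
  have c20 : (P₂ - P₁) 0 = p - a := by show P₂ 0 - P₁ 0 = p - a; rw [hx, ← hpd]
  have c21 : (P₂ - P₁) 1 = q := by show P₂ 1 - P₁ 1 = q; rw [hy, ← hqd, sub_zero]
  have c30 : (P₃ - P₁) 0 = p - a := by show P₃ 0 - P₁ 0 = p - a; rw [hx, ← hud, hU]
  have c31 : (P₃ - P₁) 1 = -q := by show P₃ 1 - P₁ 1 = -q; rw [hy, ← hvd, hVQ, sub_zero]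
  clear_value p q u v d2 d3 s d13
  clear hpd hqd hud hvd hd2 hd3 hsd hd13d h12n R1 R2 r1 r2 r3 e1 e2 e3 h12 h23 h13 hx hy
  have hQuad := aux_quad a b p q d2 ha hb hplt hq2 d2sq hR2
  have hpneg := aux_pneg a b p q d2 ha hb hab hc2 hplt hqpos d2pos hR2
  have hdel := aux_del a b p ha hb hc2 hpneg hQuad
  rw [c20, c21, c30, c31, hs, hd13, hdel,
    show (p - a) * -q - q * (p - a) = 2 * q * (a - p) by ring,
    abs_of_nonneg (by nlinarith : (0:ℝ) ≤ 2 * q * (a - p))]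
  exact ⟨aux_f1 a b p q d2 ha hb hc2 hplt hqpos d2pos hR2,
    aux_f2 a b p q d2 ha hb hc2 hplt hqpos d2pos hq2 d2sq⟩

lemma reflects_symm' (a b : ℝ) (P Q R : Pt) (h : reflects a b P Q R) : reflects a b P R Q := by
  unfold reflects at *
  rw [add_comm (‖R - P‖⁻¹ • (R - P))]
  exact h

lemma pt_ext (X Y : Pt) (h0 : X 0 = Y 0) (h1 : X 1 = Y 1) : X = Y := by
  ext i; fin_cases i <;> assumption

set_option maxHeartbeats 1000000 in
/-- Inradius and circumradius of the orbit with a vertex at the horizontal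
billiard vertex (a, 0). -/
theorem radii_at_horizontal_vertex (a b : ℝ) (hb : 0 < b) (hab : b < a)
    (P₁ P₂ P₃ : Pt) (h : IsOrbit a b P₁ P₂ P₃)
    (hx : P₁ 0 = a) (hy : P₁ 1 = 0) :
    let s₁ := ‖P₃ - P₂‖
    let s₂ := ‖P₁ - P₃‖
    let s₃ := ‖P₂ - P₁‖
    let L := s₁ + s₂ + s₃
    let A := |((P₂ - P₁) 0) * ((P₃ - P₁) 1) - ((P₂ - P₁) 1) * ((P₃ - P₁) 0)| / 2
    let r := 2 * A / L
    let R := s₁ * s₂ * s₃ / (4 * A)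
    let δ := Real.sqrt (a ^ 4 - a ^ 2 * b ^ 2 + b ^ 4)
    r = b ^ 2 * (δ - b ^ 2) / ((a ^ 2 - b ^ 2) * a) ∧ R = (a ^ 2 + δ) / (2 * a) := by
  intro s₁ s₂ s₃ L A r R δ
  obtain ⟨h12, h23, h13, e1, e2, e3, r1, r2, r3⟩ := h
  have ha : 0 < a := hb.trans hab
  have ha' : a ≠ 0 := ha.ne'
  have d2pos : 0 < ‖P₂ - P₁‖ := norm_sub_pos_iff.mpr h12.symm
  have d3pos : 0 < ‖P₃ - P₁‖ := norm_sub_pos_iff.mpr h13.symm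
  have horb : IsOrbit a b P₁ P₂ P₃ := ⟨h12, h23, h13, e1, e2, e3, r1, r2, r3⟩
  have R1 := reflects_coord a b P₁ P₂ P₃ r1
  rw [hx, hy] at R1
  rcases lt_trichotomy (P₂ 1) 0 with hq | hq | hq
  · -- P₂ 1 < 0 : swap P₂ and P₃
    have hR1 : P₂ 1 * ‖P₃ - P₁‖ + P₃ 1 * ‖P₂ - P₁‖ = 0 := by
      field_simp at R1
      exact (mul_eq_zero.mp (by linear_combination R1 : b ^ 2 * (P₂ 1 * ‖P₃ - P₁‖ + P₃ 1 * ‖P₂ - P₁‖) = 0)).resolve_left (by positivity)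
    have hv3 : 0 < P₃ 1 := by
      nlinarith [mul_pos (neg_pos.mpr hq) d3pos, d2pos, hR1]
    have hsw : IsOrbit a b P₁ P₃ P₂ :=
      ⟨h13, h23.symm, h12, e1, e3, e2, reflects_symm' a b P₁ P₂ P₃ r1,
        reflects_symm' a b P₃ P₁ P₂ r3, reflects_symm' a b P₂ P₃ P₁ r2⟩
    have hkey := key_s15 a b hb hab P₁ P₃ P₂ hsw hx hy hv3
    rw [norm_sub_rev P₂ P₃, norm_sub_rev P₁ P₂, norm_sub_rev P₃ P₁,
      show |((P₃ - P₁) 0) * ((P₂ - P₁) 1) - ((P₃ - P₁) 1) * ((P₂ - P₁) 0)| =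
        |((P₂ - P₁) 0) * ((P₃ - P₁) 1) - ((P₂ - P₁) 1) * ((P₃ - P₁) 0)| by
          rw [show ((P₃ - P₁) 0) * ((P₂ - P₁) 1) - ((P₃ - P₁) 1) * ((P₂ - P₁) 0) =
            -(((P₂ - P₁) 0) * ((P₃ - P₁) 1) - ((P₂ - P₁) 1) * ((P₃ - P₁) 0)) by ring, abs_neg],
      show ‖P₃ - P₂‖ + ‖P₂ - P₁‖ + ‖P₁ - P₃‖ = ‖P₃ - P₂‖ + ‖P₁ - P₃‖ + ‖P₂ - P₁‖ by ring,
      show ‖P₃ - P₂‖ * ‖P₂ - P₁‖ * ‖P₁ - P₃‖ = ‖P₃ - P₂‖ * ‖P₁ - P₃‖ * ‖P₂ - P₁‖ by ring]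
      at hkey
    exact hkey
  · -- P₂ 1 = 0 : impossible
    exfalso
    rw [hq] at R1
    unfold onEllipse at e2 e3
    have h20 : (P₂ 0) ^ 2 = a ^ 2 := by
      rw [hq] at e2; field_simp at e2; exact mul_right_cancel₀ (by positivity : b ^ 2 ≠ 0) (by linarith)
    have h20' : P₂ 0 = -a := by
      rcases mul_eq_zero.mp (by linear_combination h20 :
          (P₂ 0 - a) * (P₂ 0 + a) = 0) with h' | h'
      · exact absurd (pt_ext P₂ P₁ (by rw [hx]; linarith) (by rw [hy, hq])) h12.symm
      · linarith
    have h31 : P₃ 1 = 0 := by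
      field_simp at R1
      exact (mul_eq_zero.mp (by linear_combination R1 : b ^ 2 * ‖P₂ - P₁‖ * P₃ 1 = 0)).resolve_left (by positivity)
    have h30 : (P₃ 0) ^ 2 = a ^ 2 := by
      rw [h31] at e3; field_simp at e3; exact mul_right_cancel₀ (by positivity : b ^ 2 ≠ 0) (by linarith)
    rcases mul_eq_zero.mp (by linear_combination h30 :
        (P₃ 0 - a) * (P₃ 0 + a) = 0) with h' | h'
    · exact absurd (pt_ext P₃ P₁ (by rw [hx]; linarith) (by rw [hy, h31])) h13.symm
    · exact absurd (pt_ext P₂ P₃ (by rw [h20']; linarith) (by rw [hq, h31])) h23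
  · exact key_s15 a b hb hab P₁ P₂ P₃ horb hx hy hq
end
end
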